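/- arXiv:1603.02594 — 6 statements merged into one kernel-verified Lean document; each statement's English description precedes it below -/
import Mathlib

section
/- Let G be a finite simple graph on n vertices, let e = {u,v} be an edge of G, and let 1 ≤ k ≤ n. Then t_k(G) = t_k(G−e) − t_k(GΔe), where on the right-hand side t_k is computed in the graphs G−e (on n vertices) and GΔe (on n−1 vertices) respectively. -/
open scoped Classical

noncomputable section

/-- Number of connected components of the spanning subgraph with edge set `A`. -/
def numComp {V : Type*} (A : Finset (Sym2 V)) : ℕ :=
  Nat.card (SimpleGraph.fromEdgeSet (↑A : Set (Sym2 V))).ConnectedComponent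

/-- `t_k(G) = 2^{-(n-k)} ∑_{A ⊆ E, k(A) = k} (-2)^{|A|}`, where `n = |V|`. -/
def tcoef {V : Type*} [Fintype V] (G : SimpleGraph V) (k : ℕ) : ℚ :=
  (2 : ℚ) ^ ((k : ℤ) - (Fintype.card V : ℤ)) *
    ∑ A ∈ G.edgeFinset.powerset.filter (fun A => numComp A = k), (-2 : ℚ) ^ A.card

/-- `GΔe`: delete `u,v`, add a new vertex `w` (the `none` vertex) adjacent to exactly
those vertices adjacent in `G` to exactly one of `u` and `v`. -/
def symmDiffContract {V : Type*} (G : SimpleGraph V) (u v : V) :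
    SimpleGraph (Option {z : V // z ≠ u ∧ z ≠ v}) :=
  SimpleGraph.fromRel (fun a b =>
    match a, b with
    | some a, some b => G.Adj a.1 b.1
    | some a, none => Xor' (G.Adj u a.1) (G.Adj v a.1)
    | none, some b => Xor' (G.Adj u b.1) (G.Adj v b.1)
    | none, none => False)

/-!
Colour the vertices with `q` colours and give a colouring `σ` the weight `(-1)^m(σ)`, where
`m(σ)` is the number of monochromatic edges. Writing each edge factor as `1 + (-2)·[mono]` and
expanding gives `∑_σ (-1)^m(σ) = ∑_{A ⊆ E} (-2)^|A| q^k(A)`, a polynomial in `q` whose `k`-th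
coefficient is `2^(n-k) t_k(G)`. For the edge `uv`, the factor of `uv` splits the sum into the
sum for `G - e` minus twice the sum over colourings with `σ u = σ v`. These are the colourings
of `GΔe`, pulled back along the map merging `u` and `v` into `w`. The pulled-back weight is the
weight in `GΔe`: the edge set of `GΔe` is the image of that of `G - e` with multiplicities taken
mod 2 (a vertex adjacent to both `u` and `v` gives two parallel edges to `w`), and each edge sign
squares to `1`. Comparing coefficients, and noting that `GΔe` has one vertex fewer, gives the
recursion.
-/

open Finset Polynomial

theorem Finset.prod_comp_eq_prod_of_odd_card {ι κ M : Type*} [CommMonoid M] [DecidableEq κ]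
    {s : Finset ι} {t : Finset κ} (g : ι → κ) (f : κ → M) (hf : ∀ b, f b ^ 2 = 1)
    (ht : ∀ b, b ∈ t ↔ Odd #{a ∈ s | g a = b}) :
    ∏ a ∈ s, f (g a) = ∏ b ∈ t, f b := by
  have ht_sub : t ⊆ s.image g := fun b hb => by
    obtain ⟨a, ha⟩ := card_pos.mp ((ht b).mp hb).pos
    simp only [mem_filter] at ha
    exact mem_image.mpr ⟨a, ha.1, ha.2⟩
  have hpow (b : κ) : f b ^ #{a ∈ s | g a = b} = if b ∈ t then f b else 1 := by
    rw [pow_eq_pow_mod _ (hf b)]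
    split_ifs with hb
    · rw [Nat.odd_iff.mp ((ht b).mp hb), pow_one]
    · rw [Nat.mod_two_ne_one.mp fun h => hb ((ht b).mpr (Nat.odd_iff.mpr h)), pow_zero]
  rw [prod_comp, prod_congr rfl fun b _ => hpow b, prod_ite_mem, inter_eq_right.mpr ht_sub]

namespace SimpleGraph

variable {V α : Type*}

theorem Reachable.apply_eq_of_forall_adj {H : SimpleGraph V} {σ : V → α}
    (hσ : ∀ ⦃a b⦄, H.Adj a b → σ a = σ b) {a b : V} (h : H.Reachable a b) : σ a = σ b := by
  rw [reachable_iff_reflTransGen] at h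
  induction h with
  | refl => rfl
  | tail _ hbc ih => exact ih.trans (hσ hbc)

def edgeConstEquiv (H : SimpleGraph V) (α : Type*) :
    {σ : V → α // ∀ ⦃a b⦄, H.Adj a b → σ a = σ b} ≃ (H.ConnectedComponent → α) where
  toFun σ := Quot.lift σ.1 fun _ _ => Reachable.apply_eq_of_forall_adj σ.2
  invFun f := ⟨f ∘ H.connectedComponentMk,
    fun _ _ h => congrArg f (ConnectedComponent.connectedComponentMk_eq_of_adj h)⟩
  left_inv _ := rfl
  right_inv _ := funext <| ConnectedComponent.ind fun _ => rfl

theorem forall_mem_isDiag_map_iff {A : Finset (Sym2 V)} {σ : V → α} :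
    (∀ e ∈ A, (e.map σ).IsDiag) ↔
      ∀ ⦃a b⦄, (fromEdgeSet (A : Set (Sym2 V))).Adj a b → σ a = σ b := by
  refine ⟨fun h a b hab => ?_, fun h e he => ?_⟩
  · simpa using h _ ((fromEdgeSet_adj _).mp hab).1
  · induction e using Sym2.ind with
    | h a b =>
      by_cases hab : a = b
      · simp [hab]
      · simpa using h ((fromEdgeSet_adj _).mpr ⟨he, hab⟩)

theorem card_filter_forall_isDiag_map [Fintype V] [DecidableEq V] (A : Finset (Sym2 V))
    (q : ℕ) :
    #{σ : V → Fin q | ∀ e ∈ A, (e.map σ).IsDiag} = q ^ numComp A := by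
  simp_rw [forall_mem_isDiag_map_iff, ← Fintype.card_subtype, ← Nat.card_eq_fintype_card,
    Nat.card_congr (edgeConstEquiv _ _), Nat.card_fun, Nat.card_fin, numComp]

section Potts

variable [DecidableEq α]

def pottsSign (σ : V → α) (e : Sym2 V) : ℚ := if (e.map σ).IsDiag then -1 else 1

theorem pottsSign_eq_one_add (σ : V → α) (e : Sym2 V) :
    pottsSign σ e = 1 + if (e.map σ).IsDiag then -2 else 0 := by
  unfold pottsSign; split_ifs <;> norm_num

theorem pottsSign_mk (σ : V → α) (a b : V) :
    pottsSign σ s(a, b) = if σ a = σ b then -1 else 1 := by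
  simp [pottsSign]

theorem pottsSign_sq (σ : V → α) (e : Sym2 V) : pottsSign σ e ^ 2 = 1 := by
  unfold pottsSign; split_ifs <;> norm_num

theorem pottsSign_comp {W : Type*} (τ : W → α) (π : V → W) (e : Sym2 V) :
    pottsSign (τ ∘ π) e = pottsSign τ (e.map π) := by
  rw [pottsSign, pottsSign, Sym2.map_map]

def pottsWeight (H : SimpleGraph V) [Fintype H.edgeSet] (σ : V → α) : ℚ :=
  ∏ e ∈ H.edgeFinset, pottsSign σ e

theorem pottsWeight_eq_mul_deleteEdges (H : SimpleGraph V) [Fintype H.edgeSet] {e : Sym2 V}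
    [Fintype (H.deleteEdges {e}).edgeSet] (he : e ∈ H.edgeFinset) (σ : V → α) :
    H.pottsWeight σ = pottsSign σ e * (H.deleteEdges {e}).pottsWeight σ := by
  rw [pottsWeight, pottsWeight, ← mul_prod_erase _ _ he]
  congr 2
  ext
  simp [and_comm]

end Potts

def whitneyPoly (H : SimpleGraph V) [Fintype H.edgeSet] : ℚ[X] :=
  ∑ A ∈ H.edgeFinset.powerset, monomial (numComp A) ((-2 : ℚ) ^ #A)

theorem coeff_whitneyPoly (H : SimpleGraph V) [Fintype H.edgeSet] (k : ℕ) :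
    H.whitneyPoly.coeff k = ∑ A ∈ H.edgeFinset.powerset with numComp A = k, (-2 : ℚ) ^ #A := by
  simp [whitneyPoly, coeff_monomial, sum_filter]

variable [Fintype V]

def pottsSum [DecidableEq V] (H : SimpleGraph V) [Fintype H.edgeSet] (q : ℕ) : ℚ :=
  ∑ σ : V → Fin q, H.pottsWeight σ

theorem pottsSum_eq_sum_powerset [DecidableEq V] (H : SimpleGraph V) [Fintype H.edgeSet]
    (q : ℕ) :
    H.pottsSum q = ∑ A ∈ H.edgeFinset.powerset, (-2 : ℚ) ^ #A * (q : ℚ) ^ numComp A := by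
  have expand (σ : V → Fin q) : H.pottsWeight σ =
      ∑ A ∈ H.edgeFinset.powerset, if ∀ e ∈ A, (e.map σ).IsDiag then (-2 : ℚ) ^ #A else 0 := by
    simp_rw [pottsWeight, pottsSign_eq_one_add, prod_one_add, prod_ite_zero, prod_const]
  simp_rw [pottsSum, expand]
  rw [sum_comm]
  refine sum_congr rfl fun A _ => ?_
  rw [← sum_filter, sum_const, card_filter_forall_isDiag_map, nsmul_eq_mul, mul_comm]
  push_cast
  ring

theorem pottsSum_eq_deleteEdges_sub [DecidableEq V] {H : SimpleGraph V} [Fintype H.edgeSet]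
    {u v : V} [Fintype (H.deleteEdges {s(u, v)}).edgeSet] (h : H.Adj u v) (q : ℕ) :
    H.pottsSum q = (H.deleteEdges {s(u, v)}).pottsSum q -
      2 * ∑ σ : V → Fin q with σ u = σ v, (H.deleteEdges {s(u, v)}).pottsWeight σ := by
  have he : s(u, v) ∈ H.edgeFinset := H.mem_edgeFinset.mpr h
  simp_rw [pottsSum, H.pottsWeight_eq_mul_deleteEdges he, pottsSign_mk, sum_filter, mul_sum,
    ← sum_sub_distrib]
  refine sum_congr rfl fun σ _ => ?_
  split_ifs <;> ring

theorem eval_natCast_whitneyPoly [DecidableEq V] (H : SimpleGraph V) [Fintype H.edgeSet]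
    (q : ℕ) :
    H.whitneyPoly.eval (q : ℚ) = H.pottsSum q := by
  simp [whitneyPoly, eval_finsetSum, pottsSum_eq_sum_powerset]

theorem tcoef_eq_mul_coeff_whitneyPoly (H : SimpleGraph V) [Fintype H.edgeSet] (k : ℕ) :
    tcoef H k = 2 ^ ((k : ℤ) - Fintype.card V) * H.whitneyPoly.coeff k := by
  rw [tcoef, coeff_whitneyPoly]
  -- `tcoef` sums over the edge finset of the classical `Fintype` instance on `H.edgeSet`
  congr!

theorem card_filter_map_eq_mk {W : Type*} [DecidableEq W] (H : SimpleGraph V)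
    [Fintype H.edgeSet] (π : V → W) {p q : W} (hpq : p ≠ q) :
    #{e ∈ H.edgeFinset | e.map π = s(p, q)} =
      #{x ∈ ({a | π a = p} : Finset V) ×ˢ ({b | π b = q} : Finset V) | H.Adj x.1 x.2} := by
  symm
  refine card_nbij (fun x => s(x.1, x.2)) ?_ ?_ ?_
  · rintro ⟨a, b⟩ h
    simp_all
  · rintro ⟨a, b⟩ h ⟨a', b'⟩ h' hab
    simp only [coe_filter, mem_product, mem_filter, mem_univ, true_and, Set.mem_ofPred_eq] at h h'
    rcases Sym2.eq_iff.mp hab with ⟨rfl, rfl⟩ | ⟨rfl, rfl⟩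
    · rfl
    · exact absurd (h.1.1.symm.trans h'.1.2) hpq
  · intro e he
    induction e using Sym2.ind with
    | h a b =>
      simp only [coe_filter, mem_edgeFinset, mem_edgeSet, Sym2.map_mk, Sym2.eq_iff,
        Set.mem_ofPred_eq] at he
      rcases he with ⟨hab, ⟨rfl, rfl⟩ | ⟨rfl, rfl⟩⟩
      · exact ⟨(a, b), by simpa using hab, rfl⟩
      · exact ⟨(b, a), by simpa using hab.symm, Sym2.eq_swap⟩

end SimpleGraph

section MergePair

variable {V : Type*} (u v : V)

def mergePair (z : V) : Option {z : V // z ≠ u ∧ z ≠ v} :=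
  if h : z ≠ u ∧ z ≠ v then some ⟨z, h⟩ else none

variable {u v}

theorem mergePair_eq_none_iff {z : V} : mergePair u v z = none ↔ z = u ∨ z = v := by
  unfold mergePair
  split_ifs with h <;> simp only [false_iff, true_iff] <;> tauto

theorem mergePair_eq_some_iff {z : V} {y : {z : V // z ≠ u ∧ z ≠ v}} :
    mergePair u v z = some y ↔ z = y := by
  unfold mergePair
  split_ifs with h
  · simp [Subtype.ext_iff]
  · simp only [false_iff]
    rintro rfl
    exact h y.2

@[simp]
theorem mergePair_left : mergePair u v u = none := mergePair_eq_none_iff.mpr (.inl rfl)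

@[simp]
theorem mergePair_right : mergePair u v v = none := mergePair_eq_none_iff.mpr (.inr rfl)

theorem mergePair_elim (x : Option {z : V // z ≠ u ∧ z ≠ v}) :
    mergePair u v (x.elim u Subtype.val) = x := by
  cases x with
  | none => exact mergePair_left
  | some y => exact mergePair_eq_some_iff.mpr rfl

theorem SimpleGraph.mergePair_ne_of_adj_deleteEdges {G : SimpleGraph V} {a b : V}
    (h : (G.deleteEdges {s(u, v)}).Adj a b) : mergePair u v a ≠ mergePair u v b := by
  rw [deleteEdges_adj, Set.mem_singleton_iff] at h
  intro hab
  cases hπ : mergePair u v a with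
  | none =>
    rw [hπ, eq_comm, mergePair_eq_none_iff] at hab
    rcases mergePair_eq_none_iff.mp hπ with rfl | rfl <;> rcases hab with rfl | rfl
    · exact h.1.ne rfl
    · exact h.2 rfl
    · exact h.2 Sym2.eq_swap
    · exact h.1.ne rfl
  | some y =>
    rw [hπ, eq_comm, mergePair_eq_some_iff] at hab
    exact h.1.ne ((mergePair_eq_some_iff.mp hπ).trans hab.symm)

variable [Fintype V]

theorem filter_mergePair_eq_none : ({z | mergePair u v z = none} : Finset V) = {u, v} := by
  ext
  simp [mergePair_eq_none_iff]

theorem filter_mergePair_eq_some (y : {z : V // z ≠ u ∧ z ≠ v}) :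
    ({z | mergePair u v z = some y} : Finset V) = {y.1} := by
  ext
  simp [mergePair_eq_some_iff]

theorem sum_comp_mergePair [DecidableEq V] {α M : Type*} [Fintype α] [DecidableEq α]
    [AddCommMonoid M] (f : (V → α) → M) :
    ∑ τ : Option {z : V // z ≠ u ∧ z ≠ v} → α, f (τ ∘ mergePair u v) =
      ∑ σ : V → α with σ u = σ v, f σ := by
  refine sum_nbij' (· ∘ mergePair u v) (· ∘ fun x => x.elim u Subtype.val) ?_ ?_ ?_ ?_ ?_
  · simp
  · simp
  · intro τ _
    ext x
    simp [mergePair_elim]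
  · intro σ hσ
    ext z
    simp only [mem_filter] at hσ
    by_cases hz : z ≠ u ∧ z ≠ v
    · simp [mergePair, hz]
    · obtain rfl | rfl := mergePair_eq_none_iff.mp (dif_neg hz) <;> simp [hσ.2]
  · simp

theorem card_option_subtype_ne_and_ne (huv : u ≠ v) :
    Fintype.card (Option {z : V // z ≠ u ∧ z ≠ v}) + 1 = Fintype.card V := by
  have hcompl : ({z | z ≠ u ∧ z ≠ v} : Finset V) = {u, v}ᶜ := by ext; simp
  have hle := card_le_univ ({u, v} : Finset V)
  rw [card_pair huv] at hle
  rw [Fintype.card_option, Fintype.card_subtype, hcompl, card_compl, card_pair huv]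
  omega

end MergePair

namespace SimpleGraph

variable {V : Type*} {G : SimpleGraph V} {u v : V}

theorem deleteEdges_adj_coe (x : V) (y : {z : V // z ≠ u ∧ z ≠ v}) :
    (G.deleteEdges {s(u, v)}).Adj x y ↔ G.Adj x y := by
  rw [deleteEdges_adj, Set.mem_singleton_iff, Sym2.eq_iff]
  have := y.2
  tauto

theorem symmDiffContract_adj_none_some (b : {z : V // z ≠ u ∧ z ≠ v}) :
    (symmDiffContract G u v).Adj none (some b) ↔ Xor (G.Adj u b) (G.Adj v b) := by
  simp only [symmDiffContract, fromRel_adj, ne_eq, reduceCtorEq, not_false_eq_true, or_self,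
    true_and]
  rfl

theorem symmDiffContract_adj_some_some (a b : {z : V // z ≠ u ∧ z ≠ v}) :
    (symmDiffContract G u v).Adj (some a) (some b) ↔ G.Adj a b := by
  simp only [symmDiffContract, fromRel_adj, ne_eq, Option.some_inj]
  exact ⟨fun h => h.2.elim id Adj.symm, fun h => ⟨fun hab => h.ne (congrArg _ hab), .inl h⟩⟩

variable [Fintype V]

theorem mem_edgeFinset_symmDiffContract_iff_odd (he : G.Adj u v)
    [Fintype (symmDiffContract G u v).edgeSet] [Fintype (G.deleteEdges {s(u, v)}).edgeSet]
    (f : Sym2 (Option {z : V // z ≠ u ∧ z ≠ v})) :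
    f ∈ (symmDiffContract G u v).edgeFinset ↔
      Odd #{e ∈ (G.deleteEdges {s(u, v)}).edgeFinset | e.map (mergePair u v) = f} := by
  have hdiag (p) : ¬Odd #{e ∈ (G.deleteEdges {s(u, v)}).edgeFinset |
      e.map (mergePair u v) = s(p, p)} := by
    suffices {e ∈ (G.deleteEdges {s(u, v)}).edgeFinset | e.map (mergePair u v) = s(p, p)} = ∅ by
      simp [this]
    rw [filter_eq_empty_iff]
    intro e he hmap
    induction e using Sym2.ind with
    | h a b =>
      rw [mem_edgeFinset, mem_edgeSet] at he
      rw [Sym2.map_mk, Sym2.eq_iff] at hmap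
      obtain ⟨ha, hb⟩ := hmap.elim id id
      exact mergePair_ne_of_adj_deleteEdges he (ha.trans hb.symm)
  have hnone (b : {z : V // z ≠ u ∧ z ≠ v}) : (symmDiffContract G u v).Adj none (some b) ↔
      Odd #{e ∈ (G.deleteEdges {s(u, v)}).edgeFinset |
        e.map (mergePair u v) = s(none, some b)} := by
    rw [card_filter_map_eq_mk _ _ (Option.some_ne_none b).symm, card_filter, sum_product,
      filter_mergePair_eq_none, filter_mergePair_eq_some, sum_pair he.ne, sum_singleton,
      sum_singleton, deleteEdges_adj_coe, deleteEdges_adj_coe, symmDiffContract_adj_none_some]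
    by_cases hu : G.Adj u b <;> by_cases hv : G.Adj v b <;> simp [hu, hv, xor_def]
  induction f using Sym2.ind with
  | h p q =>
  rw [mem_edgeFinset, mem_edgeSet]
  rcases p with _ | a <;> rcases q with _ | b
  · exact iff_of_false (symmDiffContract G u v).irrefl (hdiag none)
  · exact hnone b
  · rw [adj_comm, Sym2.eq_swap]
    exact hnone a
  · by_cases hab : a = b
    · subst hab
      exact iff_of_false (symmDiffContract G u v).irrefl (hdiag _)
    rw [card_filter_map_eq_mk _ _ (by simpa using hab), card_filter, sum_product,
      filter_mergePair_eq_some, filter_mergePair_eq_some, sum_singleton, sum_singleton,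
      deleteEdges_adj_coe, symmDiffContract_adj_some_some]
    by_cases h : G.Adj a b <;> simp [h]

variable [Fintype (G.deleteEdges {s(u, v)}).edgeSet] [Fintype (symmDiffContract G u v).edgeSet]

theorem pottsWeight_comp_mergePair {α : Type*} [DecidableEq α] (he : G.Adj u v)
    (τ : Option {z : V // z ≠ u ∧ z ≠ v} → α) :
    (G.deleteEdges {s(u, v)}).pottsWeight (τ ∘ mergePair u v) =
      (symmDiffContract G u v).pottsWeight τ := by
  simp_rw [pottsWeight, pottsSign_comp]
  exact prod_comp_eq_prod_of_odd_card _ _ (pottsSign_sq τ)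
    (mem_edgeFinset_symmDiffContract_iff_odd he)

variable [Fintype G.edgeSet]

theorem pottsSum_eq_deleteEdges_sub_symmDiffContract [DecidableEq V] (he : G.Adj u v) (q : ℕ) :
    G.pottsSum q = (G.deleteEdges {s(u, v)}).pottsSum q -
      2 * (symmDiffContract G u v).pottsSum q := by
  rw [pottsSum_eq_deleteEdges_sub he, ← sum_comp_mergePair]
  simp_rw [pottsSum, pottsWeight_comp_mergePair he]

theorem whitneyPoly_eq_deleteEdges_sub_symmDiffContract (he : G.Adj u v) :
    G.whitneyPoly = (G.deleteEdges {s(u, v)}).whitneyPoly -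
      C 2 * (symmDiffContract G u v).whitneyPoly := by
  refine eq_of_infinite_eval_eq _ _
    (Set.infinite_of_injective_forall_mem Nat.cast_injective fun q => ?_)
  classical
  simp [eval_natCast_whitneyPoly, pottsSum_eq_deleteEdges_sub_symmDiffContract he]

end SimpleGraph

theorem tcoef_recursion_general {V : Type*} [Fintype V] (G : SimpleGraph V) (u v : V)
    (he : G.Adj u v) (k : ℕ) :
    tcoef G k = tcoef (G.deleteEdges {s(u, v)}) k - tcoef (symmDiffContract G u v) k := by
  have hcard : (Fintype.card (Option {z : V // z ≠ u ∧ z ≠ v}) : ℤ) = Fintype.card V - 1 := by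
    have := card_option_subtype_ne_and_ne he.ne
    omega
  rw [SimpleGraph.tcoef_eq_mul_coeff_whitneyPoly, SimpleGraph.tcoef_eq_mul_coeff_whitneyPoly,
    SimpleGraph.tcoef_eq_mul_coeff_whitneyPoly,
    SimpleGraph.whitneyPoly_eq_deleteEdges_sub_symmDiffContract he, coeff_sub, coeff_C_mul, hcard,
    sub_sub_eq_add_sub, add_sub_right_comm, zpow_add_one₀ two_ne_zero]
  ring

/-- for any edge `e = {u,v}` of `G` and `1 ≤ k ≤ n`,
`t_k(G) = t_k(G-e) - t_k(GΔe)`. -/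
theorem tcoef_recursion {V : Type*} [Fintype V] (G : SimpleGraph V) (u v : V)
    (he : G.Adj u v) (k : ℕ) (hk1 : 1 ≤ k) (hkn : k ≤ Fintype.card V) :
    tcoef G k = tcoef (G.deleteEdges {s(u, v)}) k - tcoef (symmDiffContract G u v) k :=
  tcoef_recursion_general G u v he k
end
end

section
/- Let G be a finite simple graph on n vertices. Then the coefficients of the co-adjoint polynomial alternate in sign: for every 1 ≤ k ≤ n, (−1)^{n−k} · t_k(G) ≥ 0; moreover t_n(G) = 1, so P(G,x) is a monic polynomial of degree n. -/
open scoped Classical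

noncomputable section

/-!
Write `S_k(E) = ∑_{A ⊆ E, k(A) = k} (-2)^|A|`, so that `t_k(G) = 2^(k-n) S_k(E(G))`.
Deletion–contraction of an edge `e = uv` gives `S_k(E) = S_k(E - e) - 2 S_{k+1}(E / e)`. The
contraction is realised on the same vertex set by merging `v` into `u`; this leaves `v`
isolated, which accounts for the shift `k ↦ k + 1`. Contraction may create pairs of parallel
edges, but such a pair contributes nothing since `(-2) + (-2) + (-2)^2 = 0`, so `E / e` can be
taken to be a simple edge set with fewer edges than `E`. Induction on the number of edges then
shows that `(-1)^(n-k) S_k(E)` is nonnegative and that `S_n(E) = 1`.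
-/

open Finset

section PowersetSum
variable {α β R : Type*} [DecidableEq β] [CommRing R]

lemma sum_powerset_image_of_injOn {m : α → β} {F : Finset α} (hm : Set.InjOn m F)
    (g : Finset β → R) :
    ∑ A ∈ F.powerset, g (A.image m) * (-2) ^ #A
      = ∑ B ∈ (F.image m).powerset, g B * (-2) ^ #B := by
  rw [powerset_image, sum_image (image_injOn_powerset_of_injOn hm)]
  refine sum_congr rfl fun A hA => ?_
  rw [card_image_of_injOn (hm.mono (mem_powerset.1 hA))]

lemma sum_powerset_insert_insert_of_map_eq [DecidableEq α] {m : α → β} {F : Finset α}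
    {a b : α} (hab : a ≠ b) (ha : a ∉ F) (hb : b ∉ F) (hm : m a = m b)
    (g : Finset β → R) :
    ∑ A ∈ (insert a (insert b F)).powerset, g (A.image m) * (-2) ^ #A
      = ∑ A ∈ F.powerset, g (A.image m) * (-2) ^ #A := by
  have ha' : a ∉ insert b F := by simp [hab, ha]
  rw [sum_powerset_insert ha', sum_powerset_insert hb, sum_powerset_insert hb, add_assoc,
    ← sum_add_distrib, ← sum_add_distrib, add_eq_left]
  refine sum_eq_zero fun A hA => ?_
  have hbA : b ∉ A := notMem_of_mem_powerset_of_notMem hA hb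
  have haA : a ∉ A := notMem_of_mem_powerset_of_notMem hA ha
  have haA' : a ∉ insert b A := by simp [hab, haA]
  simp only [image_insert, hm, insert_idem, card_insert_of_notMem hbA,
    card_insert_of_notMem haA, card_insert_of_notMem haA']
  ring

lemma exists_subset_image_sum_powerset_image_eq [DecidableEq α] (m : α → β) (F : Finset α) :
    ∃ B ⊆ F.image m, ∀ g : Finset β → R,
      ∑ A ∈ F.powerset, g (A.image m) * (-2) ^ #A = ∑ A ∈ B.powerset, g A * (-2) ^ #A := by
  induction F using strongInduction with
  | H F ih =>
  by_cases hm : Set.InjOn m F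
  · exact ⟨F.image m, subset_rfl, sum_powerset_image_of_injOn hm⟩
  obtain ⟨a, ha, b, hb, hmab, hab⟩ : ∃ a ∈ F, ∃ b ∈ F, m a = m b ∧ a ≠ b := by
    simpa [Set.InjOn] using hm
  set F' := (F.erase a).erase b
  have hbF : b ∈ F.erase a := mem_erase.2 ⟨hab.symm, hb⟩
  have hF : insert a (insert b F') = F := by rw [insert_erase hbF, insert_erase ha]
  have hF' : F' ⊂ F := (erase_ssubset hbF).trans (erase_ssubset ha)
  obtain ⟨B, hB, hsum⟩ := ih F' hF'
  refine ⟨B, hB.trans (image_subset_image hF'.subset), fun g => ?_⟩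
  calc ∑ A ∈ F.powerset, g (A.image m) * (-2) ^ #A
      = ∑ A ∈ (insert a (insert b F')).powerset, g (A.image m) * (-2) ^ #A := by rw [hF]
    _ = _ := by
      rw [sum_powerset_insert_insert_of_map_eq hab (by simp [F', hab]) (by simp [F']) hmab, hsum]

end PowersetSum

namespace SimpleGraph
variable {V : Type*}

lemma card_connectedComponent_eq_add_one [Finite V] {G H : SimpleGraph V} (f : V → V) {v : V}
    (hreach : ∀ x y, G.Reachable x y ↔ H.Reachable (f x) (f y))
    (hf : ∀ x ≠ v, f x = x) (hfv : f v ≠ v) (hv : ∀ y, H.Reachable v y → y = v) :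
    Nat.card H.ConnectedComponent = Nat.card G.ConnectedComponent + 1 := by
  have hfne : ∀ x, f x ≠ v := fun x => by
    by_cases hx : x = v
    · exact hx ▸ hfv
    · rwa [hf x hx]
  let φ (c : G.ConnectedComponent) :
      {c : H.ConnectedComponent // c ≠ H.connectedComponentMk v} :=
    Quot.lift (fun x => ⟨H.connectedComponentMk (f x),
        fun h => hfne x (hv _ (ConnectedComponent.exact h).symm)⟩)
      (fun x y h => Subtype.ext (ConnectedComponent.sound ((hreach x y).1 h))) c
  have hφ : Function.Bijective φ := by
    refine ⟨fun c d => ?_, fun ⟨c, hc⟩ => ?_⟩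
    · induction c, d using ConnectedComponent.ind₂ with
      | h x y =>
        intro hxy
        exact ConnectedComponent.sound ((hreach x y).2
          (ConnectedComponent.exact (congrArg Subtype.val hxy)))
    · induction c using ConnectedComponent.ind with
      | h y =>
        have hy : y ≠ v := fun h => hc (h ▸ rfl)
        refine ⟨G.connectedComponentMk y, Subtype.ext ?_⟩
        change H.connectedComponentMk (f y) = _
        rw [hf y hy]
  rw [← Nat.card_congr (Equiv.optionSubtypeNe (H.connectedComponentMk v)), Finite.card_option,
    Nat.card_eq_of_bijective φ hφ]

end SimpleGraph

section NumComp
open SimpleGraph Function Relation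
variable {V : Type*}

lemma numComp_le [Fintype V] (A : Finset (Sym2 V)) : numComp A ≤ Fintype.card V :=
  Nat.card_eq_fintype_card (α := V) ▸ Nat.card_le_card_of_surjective _ Quot.mk_surjective

lemma numComp_empty [Fintype V] : numComp (∅ : Finset (Sym2 V)) = Fintype.card V := by
  rw [numComp, coe_empty, fromEdgeSet_empty, ← Nat.card_eq_fintype_card]
  refine (Nat.card_eq_of_bijective _ ⟨fun x y h => ?_, Quot.mk_surjective⟩).symm
  exact reachable_bot.1 (ConnectedComponent.exact h)

/-- Contracting the edge `s(u,v)` onto `u` leaves `v` as an extra isolated vertex. -/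
lemma numComp_image_map_update [Finite V] {u v : V} (huv : u ≠ v) (A : Finset (Sym2 V)) :
    numComp (A.image (Sym2.map (update id v u))) = numComp (insert s(u,v) A) + 1 := by
  set φ : V → V := update id v u
  have hφ : ∀ x ≠ v, φ x = x := fun x hx => update_of_ne hx _ _
  have hφv : φ v = u := update_self ..
  have hφne : ∀ x, φ x ≠ v := fun x => by
    by_cases hx : x = v
    · rwa [hx, hφv]
    · rwa [hφ x hx]
  set r₁ := Sym2.ToRel (↑(insert s(u,v) A) : Set (Sym2 V))
  set r₂ := Sym2.ToRel (↑(A.image (Sym2.map φ)) : Set (Sym2 V))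
  have hr₁ : ∀ a b, r₁ a b ↔ s(a,b) = s(u,v) ∨ s(a,b) ∈ A := by simp [r₁]
  have hr₂ : ∀ p q, r₂ p q ↔ ∃ e ∈ A, e.map φ = s(p,q) := by simp [r₂]
  have hself : ∀ a, ReflTransGen r₁ a (φ a) := fun a => by
    by_cases ha : a = v
    · rw [ha, hφv]
      exact .single ((hr₁ v u).2 (.inl Sym2.eq_swap))
    · rw [hφ a ha]
  have h₁₂ : ∀ a b, r₁ a b → ReflTransGen r₂ (φ a) (φ b) := by
    intro a b hab
    rcases (hr₁ a b).1 hab with h | h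
    · rcases Sym2.eq_iff.1 h with ⟨ha, hb⟩ | ⟨ha, hb⟩ <;> rw [ha, hb, hφv, hφ u huv]
    · exact .single ((hr₂ _ _).2 ⟨_, h, rfl⟩)
  have h₂₁ : ∀ p q, r₂ p q → ReflTransGen r₁ p q := by
    intro p q hpq
    obtain ⟨e, he, hpq⟩ := (hr₂ p q).1 hpq
    induction e using Sym2.ind with
    | h a b =>
      have hab : ReflTransGen r₁ (φ a) (φ b) :=
        (Std.Symm.symm _ _ (hself a)).trans (.trans (.single ((hr₁ a b).2 (.inr he))) (hself b))
      rcases Sym2.eq_iff.1 hpq with ⟨rfl, rfl⟩ | ⟨rfl, rfl⟩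
      · exact hab
      · exact Std.Symm.symm _ _ hab
  have hv : ∀ q, ¬ r₂ v q := fun q h => by
    obtain ⟨e, -, he⟩ := (hr₂ v q).1 h
    induction e using Sym2.ind with
    | h a b => rcases Sym2.eq_iff.1 he with ⟨h, -⟩ | ⟨-, h⟩ <;> exact hφne _ h
  refine card_connectedComponent_eq_add_one φ (fun x y => ?_) hφ (hφv ▸ huv) (fun y h => ?_)
  · simp only [reachable_fromEdgeSet_eq_reflTransGen_toRel]
    exact ⟨fun h => ReflTransGen.lift' φ h₁₂ _ _ h, fun h => (hself x).trans
      ((reflTransGen_closed h₂₁ _ _ h).trans (Std.Symm.symm _ _ (hself y)))⟩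
  · rw [reachable_fromEdgeSet_eq_reflTransGen_toRel] at h
    rcases h.cases_head with rfl | ⟨c, hc, -⟩
    · rfl
    · exact absurd hc (hv c)

end NumComp

section SubgraphSum
open Function
variable {V : Type*}

lemma Sym2.not_isDiag_map_update {u v : V} {e : Sym2 V} (he : ¬ e.IsDiag) (heuv : e ≠ s(u,v)) :
    ¬ (e.map (update id v u)).IsDiag := by
  induction e using Sym2.ind with
  | h a b =>
    simp only [Sym2.map_mk, Sym2.mk_isDiag_iff, update_apply, id] at he heuv ⊢
    split_ifs <;> grind [Sym2.eq_swap]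

def subgraphSum (E : Finset (Sym2 V)) (k : ℕ) : ℚ :=
  ∑ A ∈ E.powerset.filter (fun A => numComp A = k), (-2 : ℚ) ^ #A

lemma subgraphSum_eq_sum_powerset (E : Finset (Sym2 V)) (k : ℕ) :
    subgraphSum E k = ∑ A ∈ E.powerset, (if numComp A = k then 1 else 0) * (-2 : ℚ) ^ #A := by
  simp only [subgraphSum, sum_filter, boole_mul]

variable [Fintype V]

lemma subgraphSum_empty (k : ℕ) :
    subgraphSum (∅ : Finset (Sym2 V)) k = if Fintype.card V = k then 1 else 0 := by
  simp [subgraphSum_eq_sum_powerset, numComp_empty]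

lemma subgraphSum_eq_zero_of_card_lt (E : Finset (Sym2 V)) {k : ℕ} (hk : Fintype.card V < k) :
    subgraphSum E k = 0 :=
  sum_eq_zero fun A hA => absurd (mem_filter.1 hA).2 (by have := numComp_le A; omega)

lemma exists_subgraphSum_insert {e : Sym2 V} {F : Finset (Sym2 V)} (he : ¬ e.IsDiag)
    (heF : e ∉ F) (hF : ∀ f ∈ F, ¬ f.IsDiag) :
    ∃ B : Finset (Sym2 V), (∀ f ∈ B, ¬ f.IsDiag) ∧ #B < #(insert e F) ∧
      ∀ k, subgraphSum (insert e F) k = subgraphSum F k - 2 * subgraphSum B (k + 1) := by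
  induction e using Sym2.ind with
  | h u v =>
  have huv : u ≠ v := fun h => he (by simp [h])
  obtain ⟨B, hB, hsum⟩ :=
    exists_subset_image_sum_powerset_image_eq (R := ℚ) (Sym2.map (update id v u)) F
  refine ⟨B, fun f hf => ?_, ?_, fun k => ?_⟩
  · obtain ⟨f', hf', rfl⟩ := mem_image.1 (hB hf)
    exact Sym2.not_isDiag_map_update (hF f' hf') (ne_of_mem_of_not_mem hf' heF)
  · rw [card_insert_of_notMem heF]
    exact Nat.lt_succ_of_le ((card_le_card hB).trans card_image_le)
  · simp only [subgraphSum_eq_sum_powerset]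
    rw [sum_powerset_insert heF, ← hsum, sub_eq_add_neg, ← neg_mul, mul_sum]
    refine congrArg _ (sum_congr rfl fun A hA => ?_)
    simp only [numComp_image_map_update huv A, Nat.add_right_cancel_iff,
      card_insert_of_notMem (notMem_of_mem_powerset_of_notMem hA heF), pow_succ]
    ring

lemma subgraphSum_card_eq_one {E : Finset (Sym2 V)} (hE : ∀ e ∈ E, ¬ e.IsDiag) :
    subgraphSum E (Fintype.card V) = 1 := by
  induction E using Finset.induction_on with
  | empty => simp [subgraphSum_empty]
  | insert e F heF ih =>
    obtain ⟨B, -, -, hrec⟩ := exists_subgraphSum_insert (hE e (mem_insert_self e F)) heF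
      (fun f hf => hE f (mem_insert_of_mem hf))
    rw [hrec, ih (fun f hf => hE f (mem_insert_of_mem hf)),
      subgraphSum_eq_zero_of_card_lt B (Nat.lt_succ_self _), mul_zero, sub_zero]

lemma neg_one_pow_mul_subgraphSum_nonneg {E : Finset (Sym2 V)} (hE : ∀ e ∈ E, ¬ e.IsDiag)
    (k : ℕ) : 0 ≤ (-1 : ℚ) ^ (Fintype.card V - k) * subgraphSum E k := by
  induction hn : #E using Nat.strong_induction_on generalizing E k with
  | _ n ih =>
  rcases E.eq_empty_or_nonempty with rfl | ⟨e, he⟩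
  · rw [subgraphSum_empty]
    split_ifs with h <;> simp [h]
  have hF : ∀ f ∈ E.erase e, ¬ f.IsDiag := fun f hf => hE f (mem_of_mem_erase hf)
  obtain ⟨B, hB, hBcard, hrec⟩ := exists_subgraphSum_insert (hE e he) (notMem_erase e E) hF
  rw [insert_erase he] at hBcard hrec
  have ihF := ih _ (hn ▸ card_erase_lt_of_mem he) hF k rfl
  have ihB := ih _ (hn ▸ hBcard) hB (k + 1) rfl
  rw [hrec]
  rcases lt_or_ge k (Fintype.card V) with hk | hk
  · rw [show Fintype.card V - k = Fintype.card V - (k + 1) + 1 by omega, pow_succ] at ihF ⊢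
    nlinarith
  · rwa [subgraphSum_eq_zero_of_card_lt B (by omega), mul_zero, sub_zero]

end SubgraphSum

/-- the coefficients of the co-adjoint polynomial alternate in sign:
`(-1)^{n-k} t_k(G) ≥ 0` for `1 ≤ k ≤ n`; moreover `t_n(G) = 1` (so `P(G,x)` is a
monic polynomial of degree `n`). -/
theorem tcoef_alternating_sign_and_monic {V : Type*} [Fintype V] (G : SimpleGraph V) :
    (∀ k : ℕ, 1 ≤ k → k ≤ Fintype.card V →
      0 ≤ (-1 : ℚ) ^ (Fintype.card V - k) * tcoef G k)
    ∧ tcoef G (Fintype.card V) = 1 := by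
  have hE : ∀ e ∈ G.edgeFinset, ¬ e.IsDiag := fun e he =>
    G.not_isDiag_of_mem_edgeSet (SimpleGraph.mem_edgeFinset.1 he)
  have htcoef : ∀ k, tcoef G k = 2 ^ ((k : ℤ) - Fintype.card V) * subgraphSum G.edgeFinset k :=
    fun k => rfl
  refine ⟨fun k _ _ => ?_, ?_⟩
  · rw [htcoef, mul_left_comm]
    exact mul_nonneg (by positivity) (neg_one_pow_mul_subgraphSum_nonneg hE k)
  · rw [htcoef, sub_self, zpow_zero, one_mul, subgraphSum_card_eq_one hE]
end
end

section
/- The co-adjoint polynomial is of exponential type: for every finite simple graph G = (V,E) and all x, y, Σ_{S ⊆ V} P(G[S], x) · P(G[V∖S], y) = P(G, x + y), where the sum is over all subsets S of V and P of the empty graph is 1. -/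
open scoped Classical

noncomputable section

/-- The co-adjoint polynomial `P(G,x) = 2^{-|V|} ∑_{A ⊆ E} (2x)^{k(A)} (-2)^{|A|}`
(for the empty graph on zero vertices this gives `1`). -/
def coadjoint {V : Type*} [Fintype V] (G : SimpleGraph V) (x : ℂ) : ℂ :=
  ((2 : ℂ) ^ Fintype.card V)⁻¹ *
    ∑ A ∈ G.edgeFinset.powerset, (2 * x) ^ numComp A * (-2 : ℂ) ^ A.card

/-!
Write `P(G, x) = 2^{-|V|} Z_G(2x, -2)` with `Z_G(q, v) = ∑_{A ⊆ E} q^{k(A)} v^{|A|}`. The powers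
of two combine to `2^{-|V|}`, and a pair of edge sets of `G[S]` and `G[V ∖ S]` is the same as an
edge set `A` of `G` with no edge between `S` and `V ∖ S`, i.e. such that `S` is a union of
connected components of `(V, A)`. For fixed `A`, summing `a^{k(A|S)} b^{k(A|V∖S)}` over these `S`
is summing `a^{|T|} b^{k(A) - |T|}` over the sets `T` of components, which gives `(a + b)^{k(A)}`.
-/

open Finset Function SimpleGraph

namespace SimpleGraph

variable {V : Type*}

def IsAdjClosed (H : SimpleGraph V) (s : Set V) : Prop :=
  ∀ ⦃u v⦄, H.Adj u v → u ∈ s → v ∈ s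

section Components

variable {H : SimpleGraph V}

theorem IsAdjClosed.mem_of_reachable {s : Set V} (hs : H.IsAdjClosed s) {u v : V}
    (huv : H.Reachable u v) (hu : u ∈ s) : v ∈ s := by
  obtain ⟨w⟩ := huv
  induction w with
  | nil => exact hu
  | cons huv' _ ih => exact ih (hs huv' hu)

theorem IsAdjClosed.preimage_image {s : Set V} (hs : H.IsAdjClosed s) :
    H.connectedComponentMk ⁻¹' (H.connectedComponentMk '' s) = s := by
  refine Set.Subset.antisymm ?_ (Set.subset_preimage_image _ _)
  rintro v ⟨u, hu, huv⟩
  exact hs.mem_of_reachable (ConnectedComponent.exact huv) hu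

theorem isAdjClosed_preimage (T : Set H.ConnectedComponent) :
    H.IsAdjClosed (H.connectedComponentMk ⁻¹' T) := by
  intro u v huv hu
  rwa [Set.mem_preimage, ← ConnectedComponent.sound huv.reachable]

theorem card_connectedComponent_induce_preimage (T : Set H.ConnectedComponent) :
    Nat.card (H.induce (H.connectedComponentMk ⁻¹' T)).ConnectedComponent = Nat.card T := by
  set s := H.connectedComponentMk ⁻¹' T
  let f (C : (H.induce s).ConnectedComponent) : T :=
    ⟨C.map (Embedding.induce s).toHom, C.ind fun v => v.2⟩
  refine Nat.card_congr (Equiv.ofBijective f ⟨?_, ?_⟩)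
  · intro C D hCD
    induction C using ConnectedComponent.ind with | h u =>
    induction D using ConnectedComponent.ind with | h v =>
    obtain ⟨w⟩ := ConnectedComponent.exact (congrArg Subtype.val hCD)
    have hw : ∀ x ∈ w.support, x ∈ s := fun x hx =>
      (isAdjClosed_preimage T).mem_of_reachable (w.takeUntil x hx).reachable u.2
    exact ConnectedComponent.sound (w.induce s hw).reachable
  · rintro ⟨C, hC⟩
    induction C using ConnectedComponent.ind with | h v =>
    exact ⟨(H.induce s).connectedComponentMk ⟨v, hC⟩, rfl⟩

theorem sum_pow_card_connectedComponent_induce [Fintype V] {R : Type*} [CommSemiring R]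
    (a b : R) :
    ∑ S : Finset V with H.IsAdjClosed (S : Finset V),
        a ^ Nat.card (H.induce ↑S).ConnectedComponent *
          b ^ Nat.card (H.induce ↑(Sᶜ)).ConnectedComponent =
      (a + b) ^ Nat.card H.ConnectedComponent := by
  have hcoe (T : Finset H.ConnectedComponent) :
      ((univ.filter (H.connectedComponentMk · ∈ T) : Finset V) : Set V) =
        H.connectedComponentMk ⁻¹' T := by
    ext; simp
  rw [Nat.card_eq_fintype_card, ← card_univ, ← sum_pow_mul_eq_add_pow]
  symm
  refine sum_nbij'
    (fun T : Finset H.ConnectedComponent => univ.filter (H.connectedComponentMk · ∈ T))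
    (fun S : Finset V => S.image H.connectedComponentMk) ?_ ?_ ?_ ?_ ?_
  · intro T _
    simpa [hcoe] using isAdjClosed_preimage (T : Set H.ConnectedComponent)
  · simp
  · intro T _
    ext C
    induction C using ConnectedComponent.ind with | h v =>
    simp only [mem_image, mem_filter, mem_univ, true_and]
    exact ⟨fun ⟨u, hu, huv⟩ => huv ▸ hu, fun hv => ⟨v, hv, rfl⟩⟩
  · intro S hS
    simp only [mem_filter, mem_univ, true_and] at hS
    ext v
    simpa using Set.ext_iff.1 hS.preimage_image v
  · intro T _
    rw [card_univ, ← card_compl, coe_compl, hcoe, ← Set.preimage_compl, ← coe_compl,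
      card_connectedComponent_induce_preimage, card_connectedComponent_induce_preimage,
      Nat.card_coe_set_eq, Nat.card_coe_set_eq, Set.ncard_coe_finset, Set.ncard_coe_finset]

end Components

section EdgeRestriction

variable {s t : Set V}

abbrev sym2Val (s : Set V) : Sym2 s ↪ Sym2 V :=
  (Embedding.subtype (· ∈ s)).sym2Map

def restrictEdges (s : Set V) (A : Finset (Sym2 V)) : Finset (Sym2 s) :=
  A.preimage (sym2Val s) (sym2Val s).injective.injOn

@[simp]
theorem mem_restrictEdges {A : Finset (Sym2 V)} {e : Sym2 s} :
    e ∈ restrictEdges s A ↔ e.map Subtype.val ∈ A :=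
  mem_preimage

theorem fromEdgeSet_restrictEdges (A : Finset (Sym2 V)) :
    fromEdgeSet ↑(restrictEdges s A) = (fromEdgeSet ↑A).induce s := by
  ext u v
  simp [Subtype.ext_iff]

theorem restrictEdges_edgeFinset (G : SimpleGraph V) [Fintype G.edgeSet]
    [Fintype (G.induce s).edgeSet] :
    restrictEdges s G.edgeFinset = (G.induce s).edgeFinset := by
  ext e
  induction e using Sym2.ind
  simp

theorem mem_of_mem_sym2Val {e : Sym2 s} {v : V} (hv : v ∈ (sym2Val s) e) : v ∈ s := by
  obtain ⟨u, -, rfl⟩ := Sym2.mem_map.1 hv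
  exact u.2

theorem sym2Val_ne_sym2Val (hst : Disjoint s t) (e : Sym2 s) (f : Sym2 t) :
    sym2Val s e ≠ sym2Val t f := by
  intro h
  induction e using Sym2.ind with | h u v =>
  have hu : (u : V) ∈ sym2Val t f := h ▸ Sym2.mem_map.2 ⟨u, Sym2.mem_mk_left _ _, rfl⟩
  exact hst.notMem_of_mem_left u.2 (mem_of_mem_sym2Val hu)

theorem disjoint_map_sym2Val (hst : Disjoint s t) (A : Finset (Sym2 s)) (B : Finset (Sym2 t)) :
    Disjoint (A.map (sym2Val s)) (B.map (sym2Val t)) := by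
  simp only [Finset.disjoint_left, mem_map, not_exists, not_and]
  rintro _ ⟨e, -, rfl⟩ f - h
  exact sym2Val_ne_sym2Val hst e f h.symm

theorem restrictEdges_map_union (hst : Disjoint s t) (A : Finset (Sym2 s))
    (B : Finset (Sym2 t)) : restrictEdges s (A.map (sym2Val s) ∪ B.map (sym2Val t)) = A := by
  have hB : restrictEdges s (B.map (sym2Val t)) = ∅ :=
    eq_empty_of_forall_notMem fun e he =>
      have ⟨f, _, hf⟩ := mem_map.1 (mem_restrictEdges.1 he)
      sym2Val_ne_sym2Val hst e f hf.symm
  rw [restrictEdges, preimage_union, ← restrictEdges, ← restrictEdges, hB, union_empty,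
    restrictEdges, preimage_map]

theorem mk_mem_map_restrictEdges {A : Finset (Sym2 V)} {u v : V} (huv : s(u, v) ∈ A)
    (hu : u ∈ s) (hv : v ∈ s) : s(u, v) ∈ (restrictEdges s A).map (sym2Val s) :=
  mem_map.2 ⟨s(⟨u, hu⟩, ⟨v, hv⟩), by simpa using huv, rfl⟩

theorem map_restrictEdges_union (hst : IsCompl s t) {A : Finset (Sym2 V)}
    (hA : (fromEdgeSet ↑A).IsAdjClosed s) (hdiag : ∀ e ∈ A, ¬e.IsDiag) :
    (restrictEdges s A).map (sym2Val s) ∪ (restrictEdges t A).map (sym2Val t) = A := by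
  refine Subset.antisymm (union_subset ?_ ?_) fun e he => ?_
  · exact map_subset_iff_subset_preimage.2 subset_rfl
  · exact map_subset_iff_subset_preimage.2 subset_rfl
  induction e using Sym2.ind with | h u v =>
  have hadj : (fromEdgeSet ↑A).Adj u v := ⟨he, fun h => hdiag _ he (Sym2.mk_isDiag_iff.2 h)⟩
  by_cases hu : u ∈ s
  · exact mem_union_left _ (mk_mem_map_restrictEdges he hu (hA hadj hu))
  · have hv : v ∉ s := fun hv => hu (hA hadj.symm hv)
    rw [← hst.compl_eq]
    exact mem_union_right _ (mk_mem_map_restrictEdges he hu hv)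

theorem isAdjClosed_fromEdgeSet_map_union (hst : Disjoint s t) (A : Finset (Sym2 s))
    (B : Finset (Sym2 t)) :
    (fromEdgeSet ↑(A.map (sym2Val s) ∪ B.map (sym2Val t))).IsAdjClosed s := by
  rintro u v ⟨he, -⟩ hu
  obtain ⟨e, -, he⟩ | ⟨f, -, hf⟩ := mem_union.1 he |>.imp mem_map.1 mem_map.1
  · exact mem_of_mem_sym2Val (he ▸ Sym2.mem_mk_right u v)
  · exact (hst.notMem_of_mem_left hu (mem_of_mem_sym2Val (hf ▸ Sym2.mem_mk_left u v))).elim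

end EdgeRestriction

def randomClusterSum [Fintype V] (G : SimpleGraph V) {R : Type*} [CommSemiring R]
    (q v : R) : R :=
  ∑ A ∈ G.edgeFinset.powerset, q ^ numComp A * v ^ #A

theorem randomClusterSum_induce_mul [Fintype V] (G : SimpleGraph V) {s t : Set V} [Fintype s]
    [Fintype t] (hst : IsCompl s t) {R : Type*} [CommSemiring R] (a b c : R) :
    randomClusterSum (G.induce s) a c * randomClusterSum (G.induce t) b c =
      ∑ A ∈ G.edgeFinset.powerset with (fromEdgeSet (A : Finset (Sym2 V))).IsAdjClosed s,
        a ^ Nat.card ((fromEdgeSet (A : Finset (Sym2 V))).induce s).ConnectedComponent *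
          b ^ Nat.card ((fromEdgeSet (A : Finset (Sym2 V))).induce t).ConnectedComponent *
            c ^ #A := by
  have hs (A B) := restrictEdges_map_union hst.disjoint A B
  have ht (A : Finset (Sym2 s)) (B : Finset (Sym2 t)) :
      restrictEdges t (A.map (sym2Val s) ∪ B.map (sym2Val t)) = B := by
    rw [union_comm]
    exact restrictEdges_map_union hst.disjoint.symm B A
  rw [randomClusterSum, randomClusterSum, sum_mul_sum, ← sum_product']
  refine sum_nbij' (fun p => p.1.map (sym2Val s) ∪ p.2.map (sym2Val t))
    (fun A => (restrictEdges s A, restrictEdges t A)) ?_ ?_ ?_ ?_ ?_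
  · rintro ⟨A, B⟩ hAB
    simp only [mem_product, mem_powerset, ← restrictEdges_edgeFinset] at hAB
    simp only [mem_filter, mem_powerset]
    exact ⟨union_subset (map_subset_iff_subset_preimage.2 hAB.1)
      (map_subset_iff_subset_preimage.2 hAB.2),
      isAdjClosed_fromEdgeSet_map_union hst.disjoint A B⟩
  · intro A hA
    simp only [mem_filter, mem_powerset] at hA
    simp only [mem_product, mem_powerset, ← restrictEdges_edgeFinset]
    exact ⟨monotone_preimage (sym2Val s).injective hA.1,
      monotone_preimage (sym2Val t).injective hA.1⟩
  · rintro ⟨A, B⟩ -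
    exact Prod.ext (hs A B) (ht A B)
  · intro A hA
    simp only [mem_filter, mem_powerset] at hA
    exact map_restrictEdges_union hst hA.2
      fun e he => G.not_isDiag_of_mem_edgeSet (mem_edgeFinset.1 (hA.1 he))
  · rintro ⟨A, B⟩ -
    simp only [← fromEdgeSet_restrictEdges, hs, ht, numComp,
      card_union_of_disjoint (disjoint_map_sym2Val hst.disjoint A B), card_map, pow_add]
    ring

theorem sum_randomClusterSum_induce_mul_induce_compl [Fintype V] (G : SimpleGraph V)
    {R : Type*} [CommSemiring R] (a b c : R) :
    ∑ S : Finset V, randomClusterSum (G.induce (S : Set V)) a c *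
        randomClusterSum (G.induce (↑(Sᶜ) : Set V)) b c =
      randomClusterSum G (a + b) c := by
  have hS (S : Finset V) : IsCompl (S : Set V) ↑(Sᶜ) := by
    rw [coe_compl]
    exact isCompl_compl
  simp_rw [randomClusterSum_induce_mul G (hS _), sum_filter]
  rw [sum_comm, randomClusterSum]
  simp_rw [← sum_filter, ← sum_mul, sum_pow_card_connectedComponent_induce, numComp]

theorem coadjoint_eq_randomClusterSum [Fintype V] (G : SimpleGraph V) (x : ℂ) :
    coadjoint G x = ((2 : ℂ) ^ Fintype.card V)⁻¹ * randomClusterSum G (2 * x) (-2) :=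
  rfl

end SimpleGraph

/-- the co-adjoint polynomial is of exponential type:
`∑_{S ⊆ V} P(G[S],x) · P(G[V∖S],y) = P(G,x+y)`. -/
theorem coadjoint_exponential_type {V : Type*} [Fintype V] (G : SimpleGraph V)
    (x y : ℂ) :
    ∑ S : Finset V,
        coadjoint (G.induce (↑S : Set V)) x * coadjoint (G.induce (↑(Sᶜ) : Set V)) y
      = coadjoint G (x + y) := by
  have hcard (S : Finset V) :
      Fintype.card (S : Set V) + Fintype.card (↑(Sᶜ) : Set V) = Fintype.card V := by
    simp only [coe_sort_coe, Fintype.card_coe, card_add_card_compl]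
  simp_rw [coadjoint_eq_randomClusterSum, mul_mul_mul_comm, ← mul_inv, ← pow_add, hcard,
    ← mul_sum, sum_randomClusterSum_induce_mul_induce_compl, mul_add]
end
end

section
/- Let b be any complex-valued function on finite simple graphs. Then the graph polynomial f_b is of exponential type: for every finite simple graph G = (V,E) and all x, y, Σ_{S ⊆ V} f_b(G[S], x) · f_b(G[V∖S], y) = f_b(G, x + y), where the sum is over all subsets S of V and f_b of the empty graph is 1. -/
open scoped Classical

noncomputable section

universe u

/-- The collection of (unordered) partitions of the finite set `S` into exactly `k`
nonempty parts, encoded as finsets of pairwise disjoint nonempty finsets whose union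
is `S`. -/
def partitionsInto {V : Type u} [Fintype V] (S : Finset V) (k : ℕ) :
    Finset (Finset (Finset V)) :=
  Finset.univ.filter (fun P : Finset (Finset V) =>
    P.card = k ∧ (∀ T ∈ P, T.Nonempty) ∧
      (P : Set (Finset V)).PairwiseDisjoint id ∧ P.sup id = S)

/-- `f_b(G[S], x)`: the exponential-type graph polynomial attached to the graph
function `b`, evaluated on the induced subgraph of `G` on the vertex set `S`, namely
`∑_k a_k x^k` where `a_k = ∑_{{S₁,…,S_k} partition of S} b(G[S₁])⋯b(G[S_k])`
(for `S = ∅` this gives `1`, the value of `f_b` on the empty graph). -/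
def fbOn {V : Type u} [Fintype V] (b : ∀ (W : Type u) [Fintype W], SimpleGraph W → ℂ)
    (G : SimpleGraph V) (S : Finset V) (x : ℂ) : ℂ :=
  ∑ k ∈ Finset.range (S.card + 1),
    (∑ P ∈ partitionsInto S k, ∏ T ∈ P, b _ (G.induce (↑T : Set V))) * x ^ k

/-- All partitions of `S` (any number of parts). -/
def allParts {V : Type u} [Fintype V] (S : Finset V) : Finset (Finset (Finset V)) :=
  Finset.univ.filter (fun P : Finset (Finset V) =>
    (∀ T ∈ P, T.Nonempty) ∧ (P : Set (Finset V)).PairwiseDisjoint id ∧ P.sup id = S)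

lemma mem_allParts {V : Type u} [Fintype V] {S : Finset V} {P : Finset (Finset V)} :
    P ∈ allParts S ↔ (∀ T ∈ P, T.Nonempty) ∧ (P : Set (Finset V)).PairwiseDisjoint id ∧
      P.sup id = S := by
  simp [allParts]

lemma card_le_of_mem_allParts {V : Type u} [Fintype V] {S : Finset V} {P : Finset (Finset V)}
    (hP : P ∈ allParts S) : P.card ≤ S.card := by
  obtain ⟨hne, hd, hsup⟩ := mem_allParts.mp hP
  have h1 : P.sup id = P.biUnion id := Finset.sup_eq_biUnion P id
  have h2 : (P.biUnion id).card = ∑ T ∈ P, T.card := by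
    apply Finset.card_biUnion
    intro T hT T' hT' hne'
    exact hd hT hT' hne'
  calc P.card = ∑ _T ∈ P, 1 := by simp
    _ ≤ ∑ T ∈ P, T.card := Finset.sum_le_sum (fun T hT => (hne T hT).card_pos)
    _ = S.card := by rw [← h2, ← h1, hsup]

lemma fbOn_eq_allParts {V : Type u} [Fintype V]
    (b : ∀ (W : Type u) [Fintype W], SimpleGraph W → ℂ)
    (G : SimpleGraph V) (S : Finset V) (x : ℂ) :
    fbOn b G S x = ∑ P ∈ allParts S,
      (∏ T ∈ P, b _ (G.induce (↑T : Set V))) * x ^ P.card := by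
  have key : ∀ k, partitionsInto S k = (allParts S).filter (fun P => P.card = k) := by
    intro k
    ext P
    simp only [partitionsInto, allParts, Finset.mem_filter, Finset.mem_univ, true_and]
    tauto
  rw [fbOn]
  simp_rw [key, Finset.sum_mul]
  rw [← Finset.sum_fiberwise_of_maps_to (g := fun P : Finset (Finset V) => P.card)
    (t := Finset.range (S.card + 1))
    (fun P hP => Finset.mem_range.mpr (Nat.lt_succ_of_le (card_le_of_mem_allParts hP)))]
  apply Finset.sum_congr rfl
  intro k _
  apply Finset.sum_congr rfl
  intro P hP
  rw [(Finset.mem_filter.mp hP).2]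

lemma sup_sdiff_eq_compl {V : Type u} [Fintype V] {P Q : Finset (Finset V)}
    (hd : (P : Set (Finset V)).PairwiseDisjoint id) (hsup : P.sup id = Finset.univ)
    (hQ : Q ⊆ P) : (P \ Q).sup id = (Q.sup id)ᶜ := by
  have hdisj : Disjoint (Q.sup id) ((P \ Q).sup id) := by
    rw [Finset.disjoint_left]
    intro v hv hv'
    rw [Finset.mem_sup] at hv hv'
    obtain ⟨T, hT, hvT⟩ := hv
    obtain ⟨T', hT', hvT'⟩ := hv'
    have hne : T ≠ T' := by
      rintro rfl
      exact (Finset.mem_sdiff.mp hT').2 hT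
    exact (hd (Finset.mem_coe.mpr (hQ hT))
      (Finset.mem_coe.mpr (Finset.mem_sdiff.mp hT').1) hne).le_bot
      (Finset.mem_inter.mpr ⟨hvT, hvT'⟩) |> Finset.notMem_empty v |>.elim
  have hunion : Q.sup id ⊔ (P \ Q).sup id = ⊤ := by
    rw [← Finset.sup_union, Finset.union_sdiff_of_subset hQ, hsup, Finset.top_eq_univ]
  exact ((IsCompl.mk hdisj (codisjoint_iff.mpr hunion)).compl_eq).symm


/-- Weight of a partition. -/
def wfun {V : Type u} [Fintype V] (b : ∀ (W : Type u) [Fintype W], SimpleGraph W → ℂ)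
    (G : SimpleGraph V) (P : Finset (Finset V)) : ℂ :=
  ∏ T ∈ P, b _ (G.induce (↑T : Set V))

lemma fbOn_eq_allParts' {V : Type u} [Fintype V]
    (b : ∀ (W : Type u) [Fintype W], SimpleGraph W → ℂ)
    (G : SimpleGraph V) (S : Finset V) (x : ℂ) :
    fbOn b G S x = ∑ P ∈ allParts S, wfun b G P * x ^ P.card :=
  fbOn_eq_allParts b G S x

/-- for any complex-valued function `b` on finite simple graphs, the graph
polynomial `f_b` is of exponential type:
`∑_{S ⊆ V} f_b(G[S],x) · f_b(G[V∖S],y) = f_b(G,x+y)`. -/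
theorem fb_exponential_type {V : Type u} [Fintype V]
    (b : ∀ (W : Type u) [Fintype W], SimpleGraph W → ℂ)
    (G : SimpleGraph V) (x y : ℂ) :
    ∑ S : Finset V, fbOn b G S x * fbOn b G Sᶜ y = fbOn b G Finset.univ (x + y) := by
  classical
  simp_rw [fbOn_eq_allParts']
  set D : Finset (Finset (Finset V)) := Finset.univ.filter
    (fun Q : Finset (Finset V) =>
      (∀ T ∈ Q, T.Nonempty) ∧ (Q : Set (Finset V)).PairwiseDisjoint id) with hD
  have hfib : ∀ S : Finset V, allParts S = D.filter (fun Q => Q.sup id = S) := by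
    intro S
    ext P
    simp only [allParts, hD, Finset.mem_filter, Finset.mem_univ, true_and]
    tauto
  have LHS1 : ∑ S : Finset V,
      (∑ Q ∈ allParts S, wfun b G Q * x ^ Q.card) *
        (∑ R ∈ allParts Sᶜ, wfun b G R * y ^ R.card)
      = ∑ Q ∈ D, ∑ R ∈ allParts ((Q.sup id)ᶜ),
          (wfun b G Q * x ^ Q.card) * (wfun b G R * y ^ R.card) := by
    rw [← Finset.sum_fiberwise_of_maps_to (g := fun Q : Finset (Finset V) => Q.sup id)
      (t := Finset.univ) (fun Q _ => Finset.mem_univ _)]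
    apply Finset.sum_congr rfl
    intro S _
    rw [hfib S, Finset.sum_mul]
    apply Finset.sum_congr rfl
    intro Q hQ
    rw [Finset.mul_sum]
    rw [(Finset.mem_filter.mp hQ).2]
  have RHS1 : ∑ P ∈ allParts Finset.univ, wfun b G P * (x + y) ^ P.card
      = ∑ P ∈ allParts Finset.univ, ∑ Q ∈ P.powerset,
          wfun b G P * (x ^ Q.card * y ^ (P \ Q).card) := by
    apply Finset.sum_congr rfl
    intro P _
    rw [← Finset.mul_sum]
    congr 1
    have h1 : (x + y) ^ P.card = ∏ _T ∈ P, (x + y) := (Finset.prod_const _).symm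
    rw [h1, Finset.prod_add]
    exact Finset.sum_congr rfl (fun Q _ => by rw [Finset.prod_const, Finset.prod_const])
  rw [LHS1, RHS1]
  rw [Finset.sum_sigma', Finset.sum_sigma']
  apply Finset.sum_nbij'
    (i := fun p : Σ _ : Finset (Finset V), Finset (Finset V) =>
      (⟨p.1 ∪ p.2, p.1⟩ : Σ _ : Finset (Finset V), Finset (Finset V)))
    (j := fun p : Σ _ : Finset (Finset V), Finset (Finset V) =>
      (⟨p.2, p.1 \ p.2⟩ : Σ _ : Finset (Finset V), Finset (Finset V)))
  · -- hi : forward membership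
    rintro ⟨Q, R⟩ hp
    obtain ⟨hQ, hR⟩ := Finset.mem_sigma.mp hp
    obtain ⟨-, hQne, hQd⟩ := Finset.mem_filter.mp hQ
    obtain ⟨hRne, hRd, hRsup⟩ := mem_allParts.mp hR
    refine Finset.mem_sigma.mpr ⟨mem_allParts.mpr ⟨?_, ?_, ?_⟩,
      Finset.mem_powerset.mpr Finset.subset_union_left⟩
    · intro T hT
      rcases Finset.mem_union.mp hT with h | h
      · exact hQne T h
      · exact hRne T h
    · intro T hT T' hT' hne
      rw [Finset.coe_union, Set.mem_union] at hT hT'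
      have key : ∀ A B : Finset V, A ∈ Q → B ∈ R → Disjoint (id A) (id B) := by
        intro A B hA hB
        rw [Finset.disjoint_left]
        intro v hv hv'
        have h1 : v ∈ Q.sup id := Finset.mem_sup.mpr ⟨A, hA, hv⟩
        have h2 : v ∈ R.sup id := Finset.mem_sup.mpr ⟨B, hB, hv'⟩
        rw [hRsup, Finset.mem_compl] at h2
        exact h2 h1
      rcases hT with h | h <;> rcases hT' with h' | h'
      · exact hQd h h' hne
      · exact key _ _ h h'
      · exact (key _ _ h' h).symm
      · exact hRd h h' hne
    · rw [Finset.sup_union, hRsup]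
      exact Finset.union_compl _
  · -- hj : backward membership
    rintro ⟨P, Q⟩ hp
    obtain ⟨hP, hQ⟩ := Finset.mem_sigma.mp hp
    obtain ⟨hPne, hPd, hPsup⟩ := mem_allParts.mp hP
    have hQP : Q ⊆ P := Finset.mem_powerset.mp hQ
    refine Finset.mem_sigma.mpr ⟨Finset.mem_filter.mpr ⟨Finset.mem_univ _,
      fun T hT => hPne T (hQP hT), hPd.subset (Finset.coe_subset.mpr hQP)⟩,
      mem_allParts.mpr ⟨?_, ?_, ?_⟩⟩
    · intro T hT
      exact hPne T (Finset.mem_sdiff.mp hT).1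
    · exact hPd.subset (Finset.coe_subset.mpr Finset.sdiff_subset)
    · exact sup_sdiff_eq_compl hPd hPsup hQP
  · -- left inverse
    rintro ⟨Q, R⟩ hp
    obtain ⟨hQ, hR⟩ := Finset.mem_sigma.mp hp
    obtain ⟨hRne, hRd, hRsup⟩ := mem_allParts.mp hR
    have disjQR : Disjoint Q R := by
      rw [Finset.disjoint_left]
      intro T hTQ hTR
      obtain ⟨v, hv⟩ := hRne T hTR
      have h1 : v ∈ Q.sup id := Finset.mem_sup.mpr ⟨T, hTQ, hv⟩
      have h2 : v ∈ R.sup id := Finset.mem_sup.mpr ⟨T, hTR, hv⟩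
      rw [hRsup, Finset.mem_compl] at h2
      exact h2 h1
    simp only
    rw [Finset.union_sdiff_cancel_left disjQR]
  · -- right inverse
    rintro ⟨P, Q⟩ hp
    obtain ⟨hP, hQ⟩ := Finset.mem_sigma.mp hp
    simp only
    rw [Finset.union_sdiff_of_subset (Finset.mem_powerset.mp hQ)]
  · -- values
    rintro ⟨Q, R⟩ hp
    obtain ⟨hQ, hR⟩ := Finset.mem_sigma.mp hp
    obtain ⟨hRne, hRd, hRsup⟩ := mem_allParts.mp hR
    have disjQR : Disjoint Q R := by
      rw [Finset.disjoint_left]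
      intro T hTQ hTR
      obtain ⟨v, hv⟩ := hRne T hTR
      have h1 : v ∈ Q.sup id := Finset.mem_sup.mpr ⟨T, hTQ, hv⟩
      have h2 : v ∈ R.sup id := Finset.mem_sup.mpr ⟨T, hTR, hv⟩
      rw [hRsup, Finset.mem_compl] at h2
      exact h2 h1
    simp only
    rw [Finset.union_sdiff_cancel_left disjQR]
    unfold wfun
    rw [Finset.prod_union disjQR]
    ring
end
end

section
/- Let f be an isomorphism-invariant graph polynomial (a function assigning to every finite simple graph G a polynomial f(G,x) with complex coefficients, taking equal values on isomorphic graphs) such that f of the empty graph is 1 and f is of exponential type, i.e., Σ_{S ⊆ V(G)} f(G[S], x) · f(G[V∖S], y) = f(G, x + y) holds for every finite simple graph G. Define b(H) to be the coefficient of x¹ in f(H,x) for every finite simple graph H. Then f = f_b, i.e., for every finite simple graph G on n vertices, f(G,x) = Σ_{k=1}^n a_k(G) x^k where a_k(G) = Σ_{{S₁,…,S_k}} b(G[S₁])⋯b(G[S_k]), the sum ranging over all (unordered) partitions of V(G) into exactly k nonempty sets. -/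
open scoped Classical

noncomputable section

universe u

namespace ExpAux

set_option linter.unusedSectionVars false

variable {V : Type u} [Fintype V]

lemma mem_partitionsInto {S : Finset V} {k : ℕ} {P : Finset (Finset V)} :
    P ∈ partitionsInto S k ↔
      P.card = k ∧ (∀ T ∈ P, T.Nonempty) ∧
        (P : Set (Finset V)).PairwiseDisjoint id ∧ P.sup id = S := by
  simp [partitionsInto]

lemma partitionsInto_empty_zero : partitionsInto (∅ : Finset V) 0 = {∅} := by
  ext P
  simp only [mem_partitionsInto, Finset.mem_singleton, Finset.card_eq_zero]
  constructor
  · rintro ⟨rfl, _⟩; rfl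
  · rintro rfl
    refine ⟨rfl, by simp, by simp, by simp⟩

lemma partitionsInto_zero_of_nonempty {S : Finset V} (hS : S.Nonempty) :
    partitionsInto S 0 = ∅ := by
  ext P
  simp only [mem_partitionsInto, Finset.notMem_empty, iff_false, not_and, Finset.card_eq_zero]
  rintro rfl _ _ h
  simp at h
  exact absurd h.symm hS.ne_empty

lemma card_le_of_partition {S : Finset V} {k : ℕ} {P : Finset (Finset V)}
    (hP : P ∈ partitionsInto S k) : k ≤ S.card := by
  rw [mem_partitionsInto] at hP
  obtain ⟨hcard, hne, hdisj, hsup⟩ := hP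
  have h1 : P.sup id = P.biUnion id := Finset.sup_eq_biUnion P id
  have h2 : (P.biUnion id).card = ∑ T ∈ P, T.card := by
    apply Finset.card_biUnion
    intro x hx y hy hxy
    exact hdisj hx hy hxy
  have h3 : P.card ≤ ∑ T ∈ P, T.card := by
    calc P.card = ∑ _T ∈ P, 1 := by simp
    _ ≤ ∑ T ∈ P, T.card := Finset.sum_le_sum (fun T hT => Finset.card_pos.2 (hne T hT))
  calc k = P.card := hcard.symm
  _ ≤ ∑ T ∈ P, T.card := h3
  _ = (P.biUnion id).card := h2.symm
  _ = S.card := by rw [← h1, hsup]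

lemma partitionsInto_eq_empty_of_lt {S : Finset V} {k : ℕ} (h : S.card < k) :
    partitionsInto S k = ∅ := by
  rw [Finset.eq_empty_iff_forall_notMem]
  intro P hP
  exact absurd (card_le_of_partition hP) (by omega)

/-- key recurrence for partition sums -/
lemma key_recurrence (b : Finset V → ℂ) (s : Finset V) (j : ℕ) :
    ((j : ℂ) + 1) * (∑ P ∈ partitionsInto s (j+1), ∏ T ∈ P, b T)
      = ∑ t ∈ s.powerset.erase s,
          (∑ Q ∈ partitionsInto t j, ∏ T ∈ Q, b T) * b (s \ t) := by
  have LHS1 : ((j : ℂ) + 1) * (∑ P ∈ partitionsInto s (j+1), ∏ T ∈ P, b T)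
      = ∑ P ∈ partitionsInto s (j+1), ∑ T ∈ P, (b T * ∏ T' ∈ P.erase T, b T') := by
    rw [Finset.mul_sum]
    apply Finset.sum_congr rfl
    intro P hP
    have hcard : P.card = j + 1 := (mem_partitionsInto.1 hP).1
    have : ∀ T ∈ P, b T * ∏ T' ∈ P.erase T, b T' = ∏ T' ∈ P, b T' := fun T hT =>
      Finset.mul_prod_erase P b hT
    rw [Finset.sum_congr rfl this, Finset.sum_const, hcard, nsmul_eq_mul]
    push_cast
    ring
  rw [LHS1]
  rw [Finset.sum_sigma' (partitionsInto s (j+1)) (fun P => P)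
    (fun P T => b T * ∏ T' ∈ P.erase T, b T')]
  have RHS1 : ∑ t ∈ s.powerset.erase s, (∑ Q ∈ partitionsInto t j, ∏ T ∈ Q, b T) * b (s \ t)
      = ∑ x ∈ (s.powerset.erase s).sigma (fun t => partitionsInto t j),
          (∏ T ∈ x.2, b T) * b (s \ x.1) := by
    rw [Finset.sum_sigma]
    exact Finset.sum_congr rfl fun t ht => by rw [Finset.sum_mul]
  rw [RHS1]
  refine Finset.sum_nbij' (fun x => ⟨s \ x.2, x.1.erase x.2⟩)
    (fun y => ⟨insert (s \ y.1) y.2, s \ y.1⟩) ?_ ?_ ?_ ?_ ?_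
  · rintro ⟨P, T⟩ hx
    simp only [Finset.mem_sigma] at hx ⊢
    obtain ⟨hP, hT⟩ := hx
    obtain ⟨hcard, hne, hdisj, hsup⟩ := mem_partitionsInto.1 hP
    have hTs : T ⊆ s := hsup ▸ Finset.le_sup (f := id) hT
    have hTne : T.Nonempty := hne T hT
    have hdisjT : Disjoint T ((P.erase T).sup id) := by
      rw [Finset.disjoint_sup_right]
      intro T' hT'
      exact hdisj hT (Finset.mem_of_mem_erase hT') (Finset.ne_of_mem_erase hT').symm
    have hsupP : T ⊔ (P.erase T).sup id = s := by
      have h2 : (insert T (P.erase T)).sup id = s := by rw [Finset.insert_erase hT, hsup]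
      rw [Finset.sup_insert] at h2
      exact h2
    have hErase : (P.erase T).sup id = s \ T := (hdisjT.sdiff_eq_of_sup_eq hsupP).symm
    constructor
    · rw [Finset.mem_erase, Finset.mem_powerset]
      refine ⟨?_, Finset.sdiff_subset⟩
      intro h
      rw [Finset.sdiff_eq_self_iff_disjoint] at h
      exact hTne.ne_empty (disjoint_self.1 (h.symm.mono_right hTs))
    · rw [mem_partitionsInto]
      exact ⟨by rw [Finset.card_erase_of_mem hT, hcard]; rfl,
        fun T' hT' => hne T' (Finset.mem_of_mem_erase hT'),
        hdisj.subset (by simp [Finset.erase_subset]), hErase⟩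
  · rintro ⟨t, Q⟩ hy
    simp only [Finset.mem_sigma] at hy ⊢
    obtain ⟨ht, hQ⟩ := hy
    rw [Finset.mem_erase, Finset.mem_powerset] at ht
    obtain ⟨hts, htsub⟩ := ht
    obtain ⟨hcard, hne, hdisj, hsup⟩ := mem_partitionsInto.1 hQ
    have hu : (s \ t).Nonempty := by
      rw [Finset.sdiff_nonempty]
      intro h
      exact hts (Finset.Subset.antisymm htsub h)
    have hQt : ∀ T ∈ Q, T ⊆ t := fun T hT => hsup ▸ Finset.le_sup (f := id) hT
    have hnotmem : s \ t ∉ Q := by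
      intro h
      have h1 : s \ t ⊆ t := hQt _ h
      have h2 : Disjoint (s \ t) t := Finset.sdiff_disjoint
      exact hu.ne_empty (disjoint_self.1 (h2.mono_right h1))
    constructor
    · rw [mem_partitionsInto]
      refine ⟨by rw [Finset.card_insert_of_notMem hnotmem, hcard],
        ?_, ?_, ?_⟩
      · intro T hT
        rcases Finset.mem_insert.1 hT with rfl | hT
        · exact hu
        · exact hne T hT
      · rw [Finset.coe_insert]
        refine Set.PairwiseDisjoint.insert hdisj ?_
        intro T hT _
        exact (Finset.disjoint_of_subset_right (hQt T hT) Finset.sdiff_disjoint)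
      · rw [Finset.sup_insert, hsup, id, Finset.sup_eq_union]
        exact Finset.sdiff_union_of_subset htsub
    · exact Finset.mem_insert_self _ _
  · rintro ⟨P, T⟩ hx
    simp only [Finset.mem_sigma] at hx
    obtain ⟨hP, hT⟩ := hx
    obtain ⟨hcard, hne, hdisj, hsup⟩ := mem_partitionsInto.1 hP
    have hTs : T ⊆ s := hsup ▸ Finset.le_sup (f := id) hT
    have h1 : s \ (s \ T) = T := Finset.sdiff_sdiff_eq_self hTs
    simp [Sigma.mk.inj_iff, h1, Finset.insert_erase hT]
  · rintro ⟨t, Q⟩ hy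
    simp only [Finset.mem_sigma] at hy
    obtain ⟨ht, hQ⟩ := hy
    rw [Finset.mem_erase, Finset.mem_powerset] at ht
    obtain ⟨hts, htsub⟩ := ht
    obtain ⟨hcard, hne, hdisj, hsup⟩ := mem_partitionsInto.1 hQ
    have hQt : ∀ T ∈ Q, T ⊆ t := fun T hT => hsup ▸ Finset.le_sup (f := id) hT
    have hu : (s \ t).Nonempty := by
      rw [Finset.sdiff_nonempty]
      intro h
      exact hts (Finset.Subset.antisymm htsub h)
    have hnotmem : s \ t ∉ Q := by
      intro h
      exact hu.ne_empty (disjoint_self.1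
        (Finset.sdiff_disjoint.mono_right (hQt _ h)))
    have h1 : s \ (s \ t) = t := Finset.sdiff_sdiff_eq_self htsub
    simp [Sigma.mk.inj_iff, h1, Finset.erase_insert hnotmem]
  · rintro ⟨P, T⟩ hx
    simp only [Finset.mem_sigma] at hx
    obtain ⟨hP, hT⟩ := hx
    obtain ⟨hcard, hne, hdisj, hsup⟩ := mem_partitionsInto.1 hP
    have hTs : T ⊆ s := hsup ▸ Finset.le_sup (f := id) hT
    have h1 : s \ (s \ T) = T := Finset.sdiff_sdiff_eq_self hTs
    simp only [h1]
    ring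

/-- the embedding of the subtype of a finset into the ambient type -/
def embS (s : Finset V) : ↥(↑s : Set V) ↪ V := Function.Embedding.subtype _

lemma map_embS_subset (s : Finset V) (A : Finset ↥(↑s : Set V)) :
    A.map (embS s) ⊆ s := by
  intro v hv
  rcases Finset.mem_map.1 hv with ⟨a, _, rfl⟩
  exact a.2

lemma mem_map_embS {s : Finset V} {A : Finset ↥(↑s : Set V)} {x : ↥(↑s : Set V)} :
    x.1 ∈ A.map (embS s) ↔ x ∈ A := by
  constructor
  · intro h
    rcases Finset.mem_map.1 h with ⟨a, ha, hax⟩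
    rwa [← show a = x from Subtype.ext hax]
  · intro h
    exact Finset.mem_map_of_mem _ h

lemma subtype_map_embS (s : Finset V) (A : Finset ↥(↑s : Set V)) :
    (A.map (embS s)).subtype (fun x => x ∈ (↑s : Set V)) = A := by
  ext a
  rw [Finset.mem_subtype]
  exact mem_map_embS

lemma map_embS_subtype (s : Finset V) (t : Finset V) (ht : t ⊆ s) :
    (t.subtype (fun x => x ∈ (↑s : Set V))).map (embS s) = t := by
  have := Finset.subtype_map (s := t) (fun x => x ∈ (↑s : Set V))
  rw [embS]
  rw [this]
  exact Finset.filter_true_of_mem (fun x hx => ht hx)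

lemma map_embS_compl (s : Finset V) [DecidableEq ↥(↑s : Set V)] (A : Finset ↥(↑s : Set V)) :
    (Aᶜ).map (embS s) = s \ A.map (embS s) := by
  ext v
  constructor
  · intro h
    rcases Finset.mem_map.1 h with ⟨a, ha, rfl⟩
    rw [Finset.mem_compl] at ha
    exact Finset.mem_sdiff.2 ⟨a.2, fun h' => ha (mem_map_embS.1 h')⟩
  · intro h
    rcases Finset.mem_sdiff.1 h with ⟨hv, hnv⟩
    refine Finset.mem_map.2 ⟨⟨v, hv⟩, Finset.mem_compl.2 (fun h' => hnv ?_), rfl⟩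
    exact Finset.mem_map_of_mem _ h'

/-- reindexing sums over subsets of the subtype by subsets of `s` -/
lemma sum_map_embS (s : Finset V) (g : Finset V → ℂ) :
    ∑ A : Finset ↥(↑s : Set V), g (A.map (embS s)) = ∑ t ∈ s.powerset, g t := by
  refine Finset.sum_nbij' (fun A => A.map (embS s))
    (fun t => t.subtype (fun x => x ∈ (↑s : Set V))) ?_ ?_ ?_ ?_ ?_
  · intro A _
    exact Finset.mem_powerset.2 (map_embS_subset s A)
  · intro t _
    exact Finset.mem_univ _
  · intro A _
    exact subtype_map_embS s A
  · intro t ht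
    exact map_embS_subtype s t (Finset.mem_powerset.1 ht)
  · intro A _
    rfl

/-- the iso between a doubly-induced subgraph and the corresponding induced subgraph -/
def nestIso (G : SimpleGraph V) (s : Finset V) (A : Finset ↥(↑s : Set V)) :
    ((G.induce (↑s : Set V)).induce (↑A : Set ↥(↑s : Set V)))
      ≃g (G.induce (↑(A.map (embS s)) : Set V)) where
  toFun x := ⟨x.1.1, by
    have : x.1.1 ∈ A.map (embS s) := mem_map_embS.2 x.2
    exact this⟩
  invFun y := ⟨⟨y.1, map_embS_subset s A y.2⟩, by
    have : (⟨y.1, map_embS_subset s A y.2⟩ : ↥(↑s : Set V)).1 ∈ A.map (embS s) := y.2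
    exact mem_map_embS.1 this⟩
  left_inv x := by
    apply Subtype.ext
    apply Subtype.ext
    rfl
  right_inv y := by
    apply Subtype.ext
    rfl
  map_rel_iff' := Iff.rfl

/-- the iso between the subgraph induced on `univ` and the graph itself -/
def univIso (G : SimpleGraph V) :
    (G.induce (↑(Finset.univ : Finset V) : Set V)) ≃g G where
  toFun x := x.1
  invFun v := ⟨v, by simp⟩
  left_inv x := Subtype.ext rfl
  right_inv v := rfl
  map_rel_iff' := Iff.rfl

lemma isEmpty_empty_coe : IsEmpty ↥((↑(∅ : Finset V)) : Set V) :=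
  ⟨fun x => by simpa using x.2⟩

end ExpAux

open ExpAux in
/-- let `f` be an isomorphism-invariant graph polynomial with complex
coefficients such that `f` of the empty graph is `1` and `f` is of exponential type.
Define `b(H)` as the coefficient of `x¹` in `f(H,x)`. Then `f = f_b`, i.e.
`f(G,x) = ∑_{k=1}^n a_k(G) x^k` with
`a_k(G) = ∑_{{S₁,…,S_k} partition of V(G)} b(G[S₁])⋯b(G[S_k])`
(the `k = 0` term below is nonzero only for the empty graph, where it realizes the
convention `f_b(∅) = 1`). -/
theorem exponential_type_structure
    (f : ∀ (W : Type u) [Fintype W], SimpleGraph W → Polynomial ℂ)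
    (hinv : ∀ (W W' : Type u) [Fintype W] [Fintype W'] (G : SimpleGraph W)
      (G' : SimpleGraph W'), Nonempty (G ≃g G') → f W G = f W' G')
    (hempty : ∀ (W : Type u) [Fintype W] [IsEmpty W] (G : SimpleGraph W), f W G = 1)
    (hexp : ∀ (W : Type u) [Fintype W] (G : SimpleGraph W) (x y : ℂ),
      ∑ S : Finset W,
          (f _ (G.induce (↑S : Set W))).eval x * (f _ (G.induce (↑(Sᶜ) : Set W))).eval y
        = (f W G).eval (x + y))
    (V : Type u) [Fintype V] (G : SimpleGraph V) (x : ℂ) :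
    (f V G).eval x
      = ∑ k ∈ Finset.range (Fintype.card V + 1),
          (∑ P ∈ partitionsInto (Finset.univ : Finset V) k,
            ∏ T ∈ P, (f _ (G.induce (↑T : Set V))).coeff 1) * x ^ k := by
  set g : Finset V → Polynomial ℂ := fun t => f _ (G.induce (↑t : Set V)) with hg
  set b : Finset V → ℂ := fun t => (g t).coeff 1 with hb
  set a : Finset V → ℕ → ℂ := fun s k => ∑ P ∈ partitionsInto s k, ∏ T ∈ P, b T with ha
  -- g of the empty set is 1
  have hgempty : g ∅ = 1 := by
    haveI := isEmpty_empty_coe (V := V)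
    exact hempty _ _
  have hbempty : b ∅ = 0 := by
    show (g ∅).coeff 1 = 0
    rw [hgempty, Polynomial.coeff_one]
    norm_num
  -- main induction
  have MAIN : ∀ (n : ℕ) (s : Finset V), s.card ≤ n → ∀ z : ℂ,
      (g s).eval z = ∑ k ∈ Finset.range (s.card + 1), a s k * z ^ k := by
    intro n
    induction n with
    | zero =>
      intro s hs z
      have hse : s = ∅ := Finset.card_eq_zero.1 (Nat.le_zero.1 hs)
      subst hse
      rw [hgempty]
      simp [ha, partitionsInto_empty_zero]
    | succ n IH =>
      intro s hs z
      by_cases hsn : s.card ≤ n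
      · exact IH s hsn z
      · have hcard : s.card = n + 1 := by omega
        have hsne : s.Nonempty := Finset.card_pos.1 (by omega)
        -- the transported exponential identity
        have etrans : ∀ B : Finset ↥(↑s : Set V),
            f _ ((G.induce (↑s : Set V)).induce (↑B : Set ↥(↑s : Set V)))
              = g (B.map (embS s)) := fun B => hinv _ _ _ _ ⟨nestIso G s B⟩
        have hexp' : ∀ x y : ℂ,
            ∑ t ∈ s.powerset, (g t).eval x * (g (s \ t)).eval y = (g s).eval (x + y) := by
          intro x y
          have h0 := hexp (↥(↑s : Set V)) (G.induce (↑s : Set V)) x y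
          rw [← h0]
          rw [← sum_map_embS s (fun t => (g t).eval x * (g (s \ t)).eval y)]
          apply Finset.sum_congr rfl
          intro A _
          rw [etrans, etrans, map_embS_compl]
        -- evaluation at 0 vanishes
        have heval0 : (g s).eval 0 = 0 := by
          have h0 := hexp' 0 0
          rw [show (0 : ℂ) + 0 = 0 by ring] at h0
          have hsmem : s ∈ s.powerset := Finset.mem_powerset_self s
          have hemem : (∅ : Finset V) ∈ s.powerset.erase s :=
            Finset.mem_erase.2 ⟨fun h => hsne.ne_empty h.symm, Finset.empty_mem_powerset s⟩
          rw [← Finset.sum_erase_add _ _ hsmem, ← Finset.sum_erase_add _ _ hemem] at h0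
          have hz : ∀ t ∈ (s.powerset.erase s).erase ∅,
              (g t).eval 0 * (g (s \ t)).eval 0 = 0 := by
            intro t ht
            have ht1 := Finset.mem_erase.1 ht
            have ht2 := Finset.mem_erase.1 ht1.2
            have htne : t.Nonempty := Finset.nonempty_of_ne_empty ht1.1
            have htsub : t ⊆ s := Finset.mem_powerset.1 ht2.2
            have htcard : t.card ≤ n := by
              have := Finset.card_lt_card (Finset.ssubset_iff_subset_ne.2 ⟨htsub, ht2.1⟩)
              omega
            rw [IH t htcard 0]
            have : ∑ k ∈ Finset.range (t.card + 1), a t k * (0:ℂ) ^ k = a t 0 := by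
              rw [Finset.sum_eq_single 0]
              · simp
              · intro k _ hk
                simp [zero_pow hk]
              · simp
            rw [this, ha]
            simp [partitionsInto_zero_of_nonempty htne]
          rw [Finset.sum_eq_zero hz] at h0
          rw [Finset.sdiff_empty, Finset.sdiff_self] at h0
          rw [hgempty] at h0
          simp only [Polynomial.eval_one, one_mul, mul_one, zero_add] at h0
          linear_combination h0
        -- vanishing of a t 0 for nonempty t
        have ha0 : ∀ t : Finset V, t.Nonempty → a t 0 = 0 := by
          intro t htne
          show (∑ P ∈ partitionsInto t 0, ∏ T ∈ P, b T) = 0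
          rw [partitionsInto_zero_of_nonempty htne]
          simp
        -- derivative identity via coefficient extraction
        have hcomp : ∀ (p : Polynomial ℂ) (xx : ℂ),
            (p.comp (Polynomial.C xx + Polynomial.X)).coeff 1
              = (Polynomial.derivative p).eval xx := by
          intro p xx
          calc (p.comp (Polynomial.C xx + Polynomial.X)).coeff 1
              = (Polynomial.derivative (p.comp (Polynomial.C xx + Polynomial.X))).coeff 0 := by
                rw [Polynomial.coeff_derivative]
                push_cast
                ring
            _ = (Polynomial.derivative (p.comp (Polynomial.C xx + Polynomial.X))).eval 0 :=
                Polynomial.coeff_zero_eq_eval_zero _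
            _ = (Polynomial.derivative p).eval xx := by
                rw [Polynomial.derivative_comp]
                simp [Polynomial.eval_comp]
        have hpoly : ∀ xx : ℂ,
            ∑ t ∈ s.powerset, Polynomial.C ((g t).eval xx) * g (s \ t)
              = (g s).comp (Polynomial.C xx + Polynomial.X) := by
          intro xx
          apply Polynomial.funext
          intro yy
          rw [Polynomial.eval_finset_sum, Polynomial.eval_comp]
          simp only [Polynomial.eval_mul, Polynomial.eval_C, Polynomial.eval_add,
            Polynomial.eval_X]
          exact hexp' xx yy
        have hder : ∀ xx : ℂ,
            (Polynomial.derivative (g s)).eval xx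
              = ∑ t ∈ s.powerset, (g t).eval xx * b (s \ t) := by
          intro xx
          have h1 := congrArg (fun p : Polynomial ℂ => p.coeff 1) (hpoly xx)
          simp only [Polynomial.finset_sum_coeff, Polynomial.coeff_C_mul] at h1
          rw [hcomp] at h1
          exact h1.symm
        -- the polynomial Q
        set Q : Polynomial ℂ :=
          ∑ k ∈ Finset.range (s.card + 1), Polynomial.C (a s k) * Polynomial.X ^ k with hQdef
        have hQeval : ∀ xx : ℂ, Q.eval xx = ∑ k ∈ Finset.range (s.card + 1), a s k * xx ^ k := by
          intro xx
          rw [hQdef, Polynomial.eval_finset_sum]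
          simp
        have hQ0 : Q.eval 0 = 0 := by
          rw [hQeval]
          rw [Finset.sum_eq_single 0]
          · rw [ha0 s hsne]
            simp
          · intro k _ hk
            simp [zero_pow hk]
          · simp
        have hderQ : ∀ xx : ℂ, (Polynomial.derivative Q).eval xx
            = ∑ k ∈ Finset.range s.card, a s (k+1) * (((k : ℂ)+1) * xx ^ k) := by
          intro xx
          rw [hQdef, Polynomial.derivative_sum, Polynomial.eval_finset_sum]
          have hterm : ∀ k ∈ Finset.range (s.card + 1),
              (Polynomial.derivative (Polynomial.C (a s k) * Polynomial.X ^ k)).eval xx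
                = a s k * ((k : ℂ) * xx ^ (k-1)) := by
            intro k _
            rw [Polynomial.derivative_C_mul, Polynomial.derivative_X_pow]
            simp
          rw [Finset.sum_congr rfl hterm, Finset.sum_range_succ']
          simp only [Nat.cast_zero, zero_mul, mul_zero, add_zero]
          apply Finset.sum_congr rfl
          intro k _
          push_cast
          ring_nf
        -- the combinatorial identity
        have hcomb : ∀ xx : ℂ, ∑ t ∈ s.powerset, (g t).eval xx * b (s \ t)
            = ∑ k ∈ Finset.range s.card, a s (k+1) * (((k : ℂ)+1) * xx ^ k) := by
          intro xx
          rw [← Finset.sum_erase_add _ _ (Finset.mem_powerset_self s)]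
          rw [Finset.sdiff_self, hbempty, mul_zero, add_zero]
          have step1 : ∀ t ∈ s.powerset.erase s,
              (g t).eval xx * b (s \ t)
                = ∑ k ∈ Finset.range (s.card + 1), a t k * b (s \ t) * xx ^ k := by
            intro t ht
            have ht1 := Finset.mem_erase.1 ht
            have htsub := Finset.mem_powerset.1 ht1.2
            have htlt : t.card < s.card :=
              Finset.card_lt_card (Finset.ssubset_iff_subset_ne.2 ⟨htsub, ht1.1⟩)
            rw [IH t (by omega) xx, Finset.sum_mul]
            rw [← Finset.sum_subset (Finset.range_subset_range.2 (by omega : t.card + 1 ≤ s.card + 1))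
              (fun k _ hk => by
                have hk2 : t.card < k := by
                  rw [Finset.mem_range] at hk
                  omega
                have : a t k = 0 := by
                  show (∑ P ∈ partitionsInto t k, ∏ T ∈ P, b T) = 0
                  rw [partitionsInto_eq_empty_of_lt hk2]
                  simp
                rw [this]
                ring)]
            apply Finset.sum_congr rfl
            intro k _
            ring
          rw [Finset.sum_congr rfl step1, Finset.sum_comm]
          have step2 : ∀ k ∈ Finset.range (s.card + 1),
              ∑ t ∈ s.powerset.erase s, a t k * b (s \ t) * xx ^ k
                = (((k : ℂ)+1) * a s (k+1)) * xx ^ k := by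
            intro k _
            rw [← Finset.sum_mul]
            congr 1
            rw [key_recurrence b s k]
          rw [Finset.sum_congr rfl step2, Finset.sum_range_succ]
          have hlast : a s (s.card + 1) = 0 := by
            show (∑ P ∈ partitionsInto s (s.card + 1), ∏ T ∈ P, b T) = 0
            rw [partitionsInto_eq_empty_of_lt (by omega)]
            simp
          rw [hlast, mul_zero, zero_mul, add_zero]
          apply Finset.sum_congr rfl
          intro k _
          ring
        -- conclude g s = Q
        have hFQ : g s = Q := by
          have hdeq : Polynomial.derivative (g s) = Polynomial.derivative Q := by
            apply Polynomial.funext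
            intro xx
            rw [hder xx, hcomb xx, hderQ xx]
          have hd0 : Polynomial.derivative (g s - Q) = 0 := by
            rw [Polynomial.derivative_sub, hdeq, sub_self]
          have hc := Polynomial.eq_C_of_derivative_eq_zero hd0
          have hc0 : (g s - Q).coeff 0 = 0 := by
            rw [Polynomial.coeff_zero_eq_eval_zero, Polynomial.eval_sub, heval0, hQ0, sub_self]
          rw [hc0, map_zero] at hc
          exact sub_eq_zero.1 hc
        rw [hFQ, hQeval z]
  -- final assembly
  have hVuniv : f V G = g Finset.univ := hinv _ _ _ _ ⟨(univIso G).symm⟩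
  rw [hVuniv]
  have hM := MAIN (Finset.univ : Finset V).card Finset.univ le_rfl x
  rw [hM, Finset.card_univ]
end
end

section
/- The modified matching polynomial is of exponential type: for every finite simple graph G = (V,E) and all x, y, Σ_{S ⊆ V} M(G[S], x) · M(G[V∖S], y) = M(G, x + y), where the sum is over all subsets S of V and M of the empty graph is 1. -/
open scoped Classical

noncomputable section

/-- `m_k(G)`: the number of matchings of size `k` in `G`, i.e. sets of `k` pairwise
disjoint edges (so `m_0(G) = 1`). -/
def matchCount {V : Type*} [Fintype V] (G : SimpleGraph V) (k : ℕ) : ℕ :=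
  (G.edgeFinset.powerset.filter (fun M : Finset (Sym2 V) =>
    M.card = k ∧ (M : Set (Sym2 V)).Pairwise (fun e f => ∀ w, ¬(w ∈ e ∧ w ∈ f)))).card

/-- The modified matching polynomial
`M(G,x) = ∑_{k=0}^{⌊n/2⌋} (-1)^k m_k(G) x^{n-k}` (equal to `1` on the empty graph). -/
def modMatch {V : Type*} [Fintype V] (G : SimpleGraph V) (x : ℂ) : ℂ :=
  ∑ k ∈ Finset.range (Fintype.card V / 2 + 1),
    (-1 : ℂ) ^ k * (matchCount G k : ℂ) * x ^ (Fintype.card V - k)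

/-!
Expand each factor over matchings: `M(G[S], x) = ∑ (-x)^|M| x^|S ∖ V(M)|` over the matchings
`M` of `G` covering only vertices of `S`, and likewise for `M(G, x + y)` with `S = V`. Expanding
`(-x - y)^|M| (x + y)^|V ∖ V(M)|` by the binomial theorem gives a sum over triples `(M, A, B)`
with `A ⊆ M` and `B` a set of vertices missed by `M`. Such a triple is the same as a split
`S = V(A) ∪ B` together with a matching `A` of `G[S]` and a matching `M ∖ A` of `G[V ∖ S]`,
and under this correspondence the weights agree term by term.
-/

open Finset

namespace MatchingPolynomial

lemma sum_powerset_pow_mul_pow_card_sdiff {ι R : Type*} [DecidableEq ι] [CommSemiring R]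
    (s : Finset ι) (a b : R) : ∑ t ∈ s.powerset, a ^ #t * b ^ #(s \ t) = (a + b) ^ #s := by
  rw [← sum_pow_mul_eq_add_pow]
  exact sum_congr rfl fun t ht => by rw [card_sdiff_of_subset (mem_powerset.1 ht)]

lemma compl_union_sdiff_sdiff {α : Type*} [Fintype α] [DecidableEq α] {a b s : Finset α}
    (ha : a ⊆ s) :
    (a ∪ b)ᶜ \ (s \ a) = sᶜ \ b := by
  ext v
  have := @ha v
  simp only [mem_sdiff, mem_compl, mem_union]
  tauto

section Verts

variable {V : Type*} {M N : Finset (Sym2 V)}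

def verts (M : Finset (Sym2 V)) : Finset V := M.biUnion Sym2.toFinset

@[simp]
lemma mem_verts {v : V} : v ∈ verts M ↔ ∃ e ∈ M, v ∈ e := by
  simp [verts]

lemma verts_mono (h : M ⊆ N) : verts M ⊆ verts N :=
  biUnion_subset_biUnion_of_subset_left _ h

lemma verts_union : verts (M ∪ N) = verts M ∪ verts N :=
  union_biUnion

lemma subset_sym2_iff_verts_subset {s : Finset V} : M ⊆ s.sym2 ↔ verts M ⊆ s := by
  simp only [subset_iff, mem_sym2_iff, mem_verts]
  grind

lemma disjoint_of_disjoint_verts (h : Disjoint (verts M) (verts N)) : Disjoint M N :=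
  disjoint_left.2 fun e heM heN =>
    disjoint_left.1 h (mem_verts.2 ⟨e, heM, e.out_fst_mem⟩)
      (mem_verts.2 ⟨e, heN, e.out_fst_mem⟩)

lemma forall_notMem_map_and_mem_map_iff {W : Type*} {f : W → V} (hf : Function.Injective f)
    (e e' : Sym2 W) :
    (∀ w, ¬(w ∈ e.map f ∧ w ∈ e'.map f)) ↔ ∀ w, ¬(w ∈ e ∧ w ∈ e') := by
  simp only [Sym2.mem_map]
  constructor
  · intro h w hw
    exact h (f w) ⟨⟨w, hw.1, rfl⟩, ⟨w, hw.2, rfl⟩⟩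
  · rintro h _ ⟨⟨w, hw, rfl⟩, ⟨w', hw', hww'⟩⟩
    exact h w ⟨hw, hf hww' ▸ hw'⟩

lemma pairwise_map_sym2Map_iff {W : Type*} (f : W ↪ V) (M : Finset (Sym2 W)) :
    ((M.map f.sym2Map : Set (Sym2 V)).Pairwise fun e e' => ∀ w, ¬(w ∈ e ∧ w ∈ e')) ↔
      (M : Set (Sym2 W)).Pairwise fun e e' => ∀ w, ¬(w ∈ e ∧ w ∈ e') := by
  rw [coe_map, Set.InjOn.pairwise_image f.sym2Map.injective.injOn]
  simp only [Set.Pairwise, Function.onFun, Function.Embedding.sym2Map_apply,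
    forall_notMem_map_and_mem_map_iff f.injective]

end Verts

variable {V : Type*} [Fintype V]

def matchings (G : SimpleGraph V) : Finset (Finset (Sym2 V)) :=
  G.edgeFinset.powerset.filter fun M =>
    (M : Set (Sym2 V)).Pairwise fun e f => ∀ w, ¬(w ∈ e ∧ w ∈ f)

variable {G : SimpleGraph V} {M N : Finset (Sym2 V)}

lemma mem_matchings : M ∈ matchings G ↔ M ⊆ G.edgeFinset ∧
    (M : Set (Sym2 V)).Pairwise fun e f => ∀ w, ¬(w ∈ e ∧ w ∈ f) := by
  rw [matchings, mem_filter, mem_powerset]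

lemma mem_matchings_of_subset (hM : M ∈ matchings G) (h : N ⊆ M) : N ∈ matchings G := by
  rw [mem_matchings] at hM ⊢
  exact ⟨h.trans hM.1, hM.2.mono (coe_subset.2 h)⟩

lemma union_mem_matchings (hM : M ∈ matchings G) (hN : N ∈ matchings G)
    (h : Disjoint (verts M) (verts N)) : M ∪ N ∈ matchings G := by
  rw [mem_matchings] at hM hN ⊢
  refine ⟨union_subset hM.1 hN.1, ?_⟩
  rw [coe_union, Set.pairwise_union]
  refine ⟨hM.2, hN.2, fun e he f hf _ => ?_⟩
  have hdisj := disjoint_left.1 h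
  refine ⟨fun w hw => hdisj (mem_verts.2 ⟨e, he, hw.1⟩) (mem_verts.2 ⟨f, hf, hw.2⟩),
    fun w hw => hdisj (mem_verts.2 ⟨e, he, hw.2⟩) (mem_verts.2 ⟨f, hf, hw.1⟩)⟩

lemma disjoint_verts_sdiff (hM : M ∈ matchings G) (h : N ⊆ M) :
    Disjoint (verts N) (verts (M \ N)) := by
  refine disjoint_left.2 fun v hvN hvMN => ?_
  obtain ⟨e, heN, hve⟩ := mem_verts.1 hvN
  obtain ⟨f, hfMN, hvf⟩ := mem_verts.1 hvMN
  obtain ⟨hfM, hfN⟩ := mem_sdiff.1 hfMN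
  exact (mem_matchings.1 hM).2 (h heN) hfM (ne_of_mem_of_not_mem heN hfN) v ⟨hve, hvf⟩

lemma card_verts (hM : M ∈ matchings G) : #(verts M) = 2 * #M := by
  obtain ⟨hsub, hpw⟩ := mem_matchings.1 hM
  rw [verts, card_biUnion, sum_const_nat, mul_comm]
  · intro e he
    exact Sym2.card_toFinset_of_not_isDiag e
      (G.not_isDiag_of_mem_edgeSet (SimpleGraph.mem_edgeFinset.1 (hsub he)))
  · intro e he f hf hef
    exact disjoint_left.2 fun w hwe hwf =>
      hpw he hf hef w ⟨Sym2.mem_toFinset.1 hwe, Sym2.mem_toFinset.1 hwf⟩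

lemma two_mul_card_le (hM : M ∈ matchings G) : 2 * #M ≤ Fintype.card V :=
  card_verts hM ▸ card_le_univ _

lemma matchCount_eq_card_filter (G : SimpleGraph V) (k : ℕ) :
    matchCount G k = #((matchings G).filter (#· = k)) := by
  rw [matchCount, matchings, filter_filter]
  simp only [and_comm]

lemma modMatch_eq_sum_matchings (G : SimpleGraph V) (x : ℂ) :
    modMatch G x = ∑ M ∈ matchings G, (-1) ^ #M * x ^ (Fintype.card V - #M) := by
  have hmaps : ∀ M ∈ matchings G, #M ∈ range (Fintype.card V / 2 + 1) := fun M hM => by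
    have := two_mul_card_le hM
    rw [mem_range]
    omega
  rw [← sum_fiberwise_of_maps_to hmaps, modMatch]
  refine sum_congr rfl fun k _ => ?_
  rw [sum_congr rfl fun M hM => by rw [(mem_filter.1 hM).2], sum_const, nsmul_eq_mul,
    matchCount_eq_card_filter]
  ring

lemma neg_one_pow_mul_pow_card_sub_eq (hM : M ∈ matchings G) {s : Finset V} (hs : verts M ⊆ s)
    (x : ℂ) :
    (-1) ^ #M * x ^ (#s - #M) = (-x) ^ #M * x ^ #(s \ verts M) := by
  have hcard := card_verts hM
  have hle := card_le_card hs
  rw [card_sdiff_of_subset hs, hcard, show #s - #M = #M + (#s - 2 * #M) by omega, pow_add,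
    neg_pow]
  ring

lemma map_matchings_induce (G : SimpleGraph V) (s : Finset V) :
    (matchings (G.induce (s : Set V))).map
        (mapEmbedding (Function.Embedding.subtype (· ∈ (s : Set V))).sym2Map).toEmbedding =
      (matchings G).filter (verts · ⊆ s) := by
  set φ := (Function.Embedding.subtype (· ∈ (s : Set V))).sym2Map
  have hedges : ∀ M : Finset (Sym2 V),
      M ⊆ (G.induce (s : Set V)).edgeFinset.map φ ↔ M ⊆ G.edgeFinset ∧ verts M ⊆ s := by
    intro M
    have hmap : (G.induce (s : Set V)).edgeFinset.map φ = G.edgeFinset ∩ s.sym2 := by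
      convert SimpleGraph.map_edgeFinset_induce (G := G) (s := (s : Set V))
      simp
    rw [hmap, subset_inter_iff, subset_sym2_iff_verts_subset]
  ext M
  simp only [mem_map, mem_filter, RelEmbedding.coe_toEmbedding, mapEmbedding_apply]
  constructor
  · rintro ⟨M', hM', rfl⟩
    obtain ⟨hsub, hpw⟩ := mem_matchings.1 hM'
    obtain ⟨hG, hs⟩ := (hedges _).1 (map_subset_map.2 hsub)
    exact ⟨mem_matchings.2 ⟨hG, (pairwise_map_sym2Map_iff _ _).2 hpw⟩, hs⟩
  · rintro ⟨hM, hs⟩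
    obtain ⟨hG, hpw⟩ := mem_matchings.1 hM
    obtain ⟨M', hsub, rfl⟩ := subset_map_iff.1 ((hedges M).2 ⟨hG, hs⟩)
    exact ⟨M', mem_matchings.2 ⟨hsub, (pairwise_map_sym2Map_iff _ _).1 hpw⟩, rfl⟩

lemma modMatch_induce_eq_sum (G : SimpleGraph V) (s : Finset V) (x : ℂ) :
    modMatch (G.induce (s : Set V)) x =
      ∑ M ∈ (matchings G).filter (verts · ⊆ s), (-x) ^ #M * x ^ #(s \ verts M) := by
  rw [modMatch_eq_sum_matchings, ← map_matchings_induce, sum_map]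
  refine sum_congr rfl fun M' hM' => ?_
  have hmem := mem_filter.1 (map_matchings_induce G s ▸ mem_map_of_mem _ hM')
  simp only [RelEmbedding.coe_toEmbedding, mapEmbedding_apply] at hmem ⊢
  rw [← neg_one_pow_mul_pow_card_sub_eq hmem.1 hmem.2, card_map]
  simp

lemma sum_split_matchings_eq (G : SimpleGraph V)
    (g : Finset (Sym2 V) → Finset (Sym2 V) → Finset V → ℂ) :
    ∑ S : Finset V, ∑ M₁ ∈ (matchings G).filter (verts · ⊆ S),
        ∑ M₂ ∈ (matchings G).filter (verts · ⊆ Sᶜ), g M₁ M₂ (S \ verts M₁) =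
      ∑ M ∈ matchings G, ∑ A ∈ M.powerset, ∑ B ∈ (verts M)ᶜ.powerset, g A (M \ A) B := by
  simp_rw [← sum_product', sum_sigma']
  refine sum_nbij'
    (fun p => ⟨p.2.1 ∪ p.2.2, (p.2.1, p.1 \ verts p.2.1)⟩)
    (fun q => ⟨verts q.2.1 ∪ q.2.2, (q.2.1, q.1 \ q.2.1)⟩) ?_ ?_ ?_ ?_ ?_
  · rintro ⟨S, M₁, M₂⟩ hp
    simp only [mem_sigma, mem_univ, mem_product, mem_filter, mem_powerset, true_and] at hp ⊢
    obtain ⟨⟨hM₁, hs₁⟩, hM₂, hs₂⟩ := hp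
    refine ⟨union_mem_matchings hM₁ hM₂ (disjoint_compl_right.mono hs₁ hs₂),
      subset_union_left, fun v hv => ?_⟩
    obtain ⟨hvS, hv₁⟩ := mem_sdiff.1 hv
    rw [mem_compl, verts_union, mem_union, not_or]
    exact ⟨hv₁, fun hv₂ => mem_compl.1 (hs₂ hv₂) hvS⟩
  · rintro ⟨M, A, B⟩ hq
    simp only [mem_sigma, mem_univ, mem_product, mem_filter, mem_powerset, true_and] at hq ⊢
    obtain ⟨hM, hA, hB⟩ := hq
    refine ⟨⟨mem_matchings_of_subset hM hA, subset_union_left⟩,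
      mem_matchings_of_subset hM sdiff_subset, ?_⟩
    rw [subset_compl_iff_disjoint_left, disjoint_union_left]
    exact ⟨disjoint_verts_sdiff hM hA,
      (subset_compl_iff_disjoint_right.1 hB).mono_right (verts_mono sdiff_subset)⟩
  · rintro ⟨S, M₁, M₂⟩ hp
    simp only [mem_sigma, mem_univ, mem_product, mem_filter, true_and] at hp
    obtain ⟨⟨_, hs₁⟩, _, hs₂⟩ := hp
    rw [union_sdiff_of_subset hs₁, union_sdiff_cancel_left
      (disjoint_of_disjoint_verts (disjoint_compl_right.mono hs₁ hs₂))]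
  · rintro ⟨M, A, B⟩ hq
    simp only [mem_sigma, mem_product, mem_powerset] at hq
    obtain ⟨_, hA, hB⟩ := hq
    rw [union_sdiff_of_subset hA, union_sdiff_cancel_left
      ((subset_compl_iff_disjoint_right.1 hB).symm.mono_left (verts_mono hA))]
  · rintro ⟨S, M₁, M₂⟩ hp
    simp only [mem_sigma, mem_univ, mem_product, mem_filter, true_and] at hp
    obtain ⟨⟨_, hs₁⟩, _, hs₂⟩ := hp
    rw [union_sdiff_cancel_left
      (disjoint_of_disjoint_verts (disjoint_compl_right.mono hs₁ hs₂))]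

end MatchingPolynomial

open MatchingPolynomial

/-- the modified matching polynomial is of exponential type:
`∑_{S ⊆ V} M(G[S],x) · M(G[V∖S],y) = M(G,x+y)`. -/
theorem modMatch_exponential_type {V : Type*} [Fintype V] (G : SimpleGraph V)
    (x y : ℂ) :
    ∑ S : Finset V,
        modMatch (G.induce (↑S : Set V)) x * modMatch (G.induce (↑(Sᶜ) : Set V)) y
      = modMatch G (x + y) := by
  set g : Finset (Sym2 V) → Finset (Sym2 V) → Finset V → ℂ := fun A A' B =>
    (-x) ^ #A * (-y) ^ #A' * (x ^ #B * y ^ #((verts (A ∪ A'))ᶜ \ B))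
  have hsplit : ∀ S : Finset V,
      modMatch (G.induce (S : Set V)) x * modMatch (G.induce (↑Sᶜ : Set V)) y =
        ∑ M₁ ∈ (matchings G).filter (verts · ⊆ S),
          ∑ M₂ ∈ (matchings G).filter (verts · ⊆ Sᶜ), g M₁ M₂ (S \ verts M₁) := by
    intro S
    rw [modMatch_induce_eq_sum, modMatch_induce_eq_sum, sum_mul_sum]
    refine sum_congr rfl fun M₁ hM₁ => sum_congr rfl fun M₂ _ => ?_
    simp only [g, verts_union, compl_union_sdiff_sdiff (mem_filter.1 hM₁).2]
    ring
  have hmerge : ∀ M ∈ matchings G,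
      ∑ A ∈ M.powerset, ∑ B ∈ (verts M)ᶜ.powerset, g A (M \ A) B =
        (-1) ^ #M * (x + y) ^ (Fintype.card V - #M) := by
    intro M hM
    rw [← card_univ, neg_one_pow_mul_pow_card_sub_eq hM (subset_univ _), ← compl_eq_univ_sdiff,
      neg_add, ← sum_powerset_pow_mul_pow_card_sdiff, ← sum_powerset_pow_mul_pow_card_sdiff,
      sum_mul_sum]
    refine sum_congr rfl fun A hA => sum_congr rfl fun B _ => ?_
    simp only [g, union_sdiff_of_subset (mem_powerset.1 hA)]
  rw [sum_congr rfl fun S _ => hsplit S, sum_split_matchings_eq, modMatch_eq_sum_matchings]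
  exact sum_congr rfl hmerge
end
end
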